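/- arXiv:2308.13161 — 10 statements merged into one kernel-verified Lean document; each statement's English description precedes it below -/
import Mathlib

section
/- Let n ≥ 1, let g, s be vectors in ℝⁿ, let H : ℝⁿ → ℝⁿ be a symmetric linear map, and let σ > 0. If s satisfies the step conditions ⟨g, s⟩ + ⟨s, H s⟩ + σ‖s‖³ = 0 and ⟨s, H s⟩ + σ‖s‖³ ≥ 0, then ⟨g, s⟩ + (1/2)⟨s, H s⟩ + (σ/3)‖s‖³ ≤ −(1/6)σ‖s‖³; equivalently, the cubic model decrease satisfies m(x) − m(x+s) ≥ (1/6)σ‖s‖³. -/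
open RealInnerProductSpace

/-- Model decrease of the cubic model: if the step `s` satisfies the standard
approximate-minimizer conditions, then the cubic model decreases by at least
`(1/6) σ ‖s‖³`. -/
theorem sarc_model_decrease (n : ℕ) (hn : 1 ≤ n)
    (g s : EuclideanSpace ℝ (Fin n))
    (H : EuclideanSpace ℝ (Fin n) →L[ℝ] EuclideanSpace ℝ (Fin n))
    (hHsym : ∀ u v : EuclideanSpace ℝ (Fin n), ⟪H u, v⟫ = ⟪u, H v⟫)
    (σ : ℝ) (hσ : 0 < σ)
    (hstep1 : ⟪g, s⟫ + ⟪s, H s⟫ + σ * ‖s‖ ^ 3 = 0)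
    (hstep2 : ⟪s, H s⟫ + σ * ‖s‖ ^ 3 ≥ 0) :
    ⟪g, s⟫ + (1 / 2) * ⟪s, H s⟫ + (σ / 3) * ‖s‖ ^ 3 ≤ -((1 / 6) * σ * ‖s‖ ^ 3) := by
  nlinarith [sq_nonneg (‖s‖), hstep2]
end

section
/- Let n ≥ 1, g, s ∈ ℝⁿ, H : ℝⁿ → ℝⁿ a symmetric linear map, σ > 0, θ ∈ (0,1), ε_f' > 0, and f(x), f(x⁺) ∈ ℝ. If s satisfies the step conditions ⟨g, s⟩ + ⟨s, H s⟩ + σ‖s‖³ = 0 and ⟨s, H s⟩ + σ‖s‖³ ≥ 0, and the acceptance condition f(x) − f(x⁺) + 2ε_f' ≥ θ·(m(x) − m(x+s)) holds, then f(x) − f(x⁺) ≥ (θ/6)σ‖s‖³ − 2ε_f'. -/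
open RealInnerProductSpace

/-- Improvement of function-value estimates on successful (accepted) iterations:
if the step satisfies the approximate-minimizer conditions and the acceptance
condition holds, then `f(x) − f(x⁺) ≥ (θ/6) σ ‖s‖³ − 2 ε_f'`.
Here `m(x) − m(x+s) = −(⟪g, s⟫ + (1/2)⟪s, H s⟫ + (σ/3)‖s‖³)`. -/
theorem sarc_estimate_decrease_on_success (n : ℕ) (hn : 1 ≤ n)
    (g s : EuclideanSpace ℝ (Fin n))
    (H : EuclideanSpace ℝ (Fin n) →L[ℝ] EuclideanSpace ℝ (Fin n))
    (hHsym : ∀ u v : EuclideanSpace ℝ (Fin n), ⟪H u, v⟫ = ⟪u, H v⟫)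
    (σ θ εf' fx fxp : ℝ) (hσ : 0 < σ) (hθ : θ ∈ Set.Ioo (0 : ℝ) 1) (hεf' : 0 < εf')
    (hstep1 : ⟪g, s⟫ + ⟪s, H s⟫ + σ * ‖s‖ ^ 3 = 0)
    (hstep2 : ⟪s, H s⟫ + σ * ‖s‖ ^ 3 ≥ 0)
    (haccept : fx - fxp + 2 * εf' ≥
      θ * (-(⟪g, s⟫ + (1 / 2) * ⟪s, H s⟫ + (σ / 3) * ‖s‖ ^ 3))) :
    fx - fxp ≥ (θ / 6) * σ * ‖s‖ ^ 3 - 2 * εf' := by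
  nlinarith [mul_pos hθ.1 hσ, hθ.1, hθ.2, mul_le_mul_of_nonneg_left hstep2 (le_of_lt hθ.1)]
end

section
/- Let n ≥ 1, let φ : ℝⁿ → ℝ, let x, s ∈ ℝⁿ with x⁺ = x + s, let g ∈ ℝⁿ, let H : ℝⁿ → ℝⁿ be a symmetric linear map, let σ > 0, θ ∈ (0,1), ε_f' > 0, and let f(x), f(x⁺) ∈ ℝ with estimation errors e = |f(x) − φ(x)| and e⁺ = |f(x⁺) − φ(x⁺)|. If s satisfies the step conditions ⟨g, s⟩ + ⟨s, H s⟩ + σ‖s‖³ = 0 and ⟨s, H s⟩ + σ‖s‖³ ≥ 0, and the acceptance condition f(x) − f(x⁺) + 2ε_f' ≥ θ·(m(x) − m(x+s)) holds, then the true function decrease satisfies φ(x) − φ(x⁺) ≥ (θ/6)σ‖s‖³ − e − e⁺ − 2ε_f'. -/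
open RealInnerProductSpace

/-- True function decrease on successful (accepted) iterations: if the step
satisfies the approximate-minimizer conditions and the acceptance condition
holds, then `φ(x) − φ(x⁺) ≥ (θ/6) σ ‖s‖³ − e − e⁺ − 2 ε_f'`, where `e, e⁺` are
the function-estimation errors. -/
theorem sarc_true_decrease_on_success (n : ℕ) (hn : 1 ≤ n)
    (φ : EuclideanSpace ℝ (Fin n) → ℝ)
    (x s g : EuclideanSpace ℝ (Fin n))
    (H : EuclideanSpace ℝ (Fin n) →L[ℝ] EuclideanSpace ℝ (Fin n))
    (hHsym : ∀ u v : EuclideanSpace ℝ (Fin n), ⟪H u, v⟫ = ⟪u, H v⟫)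
    (σ θ εf' fx fxp : ℝ) (hσ : 0 < σ) (hθ : θ ∈ Set.Ioo (0 : ℝ) 1) (hεf' : 0 < εf')
    (hstep1 : ⟪g, s⟫ + ⟪s, H s⟫ + σ * ‖s‖ ^ 3 = 0)
    (hstep2 : ⟪s, H s⟫ + σ * ‖s‖ ^ 3 ≥ 0)
    (haccept : fx - fxp + 2 * εf' ≥
      θ * (-(⟪g, s⟫ + (1 / 2) * ⟪s, H s⟫ + (σ / 3) * ‖s‖ ^ 3))) :
    φ x - φ (x + s) ≥
      (θ / 6) * σ * ‖s‖ ^ 3 - |fx - φ x| - |fxp - φ (x + s)| - 2 * εf' := by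
  obtain ⟨hθ0, hθ1⟩ := hθ
  have h1 : fx - φ x ≤ |fx - φ x| := le_abs_self _
  have h2 : -(fxp - φ (x + s)) ≤ |fxp - φ (x + s)| := neg_le_abs _
  nlinarith [mul_le_mul_of_nonneg_left hstep2 hθ0.le]
end

section
/- Let n ≥ 1, let φ : ℝⁿ → ℝ be twice continuously differentiable with L_H-Lipschitz continuous Hessian (in operator norm), let x, s ∈ ℝⁿ, let g ∈ ℝⁿ and let H : ℝⁿ → ℝⁿ be a symmetric linear map satisfying the accuracy conditions ‖∇φ(x) − g‖ ≤ κ_g·max{μ/σ, ‖s‖²} and ‖(∇²φ(x) − H)s‖ ≤ κ_H·max{μ/σ, ‖s‖²}, where κ_g, κ_H ≥ 0, μ > 0, σ > 0. Then φ(x+s) − φ(x) − ⟨g, s⟩ − (1/2)⟨s, H s⟩ ≤ (κ_g + κ_H/2)·max{μ/σ, ‖s‖²}·‖s‖ + (L_H/2)‖s‖³. -/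
/-!
The model error splits as the exact second-order Taylor remainder
`φ(x+s) − φ(x) − ⟪∇φ(x), s⟫ − ½⟪∇²φ(x)s, s⟫` plus the inexactness terms `⟪∇φ(x) − g, s⟫` and
`½⟪(∇²φ(x) − H)s, s⟫`. The latter two are bounded by Cauchy–Schwarz and the accuracy conditions.
For the remainder, the Lipschitz Hessian gives `‖∇φ(x+ts) − ∇φ(x) − t∇²φ(x)s‖ ≤ L_H t²‖s‖²/2`,
and integrating once more along the segment bounds the remainder by `L_H‖s‖³/6`.
-/

open RealInnerProductSpace

section

variable {E F : Type*} [NormedAddCommGroup E] [NormedSpace ℝ E]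
  [NormedAddCommGroup F] [NormedSpace ℝ F]

theorem HasFDerivAt.hasDerivAt_comp_add_smul {f : E → F} {f' : E →L[ℝ] F} {x s : E} {t : ℝ}
    (hf : HasFDerivAt f f' (x + t • s)) :
    HasDerivAt (fun t : ℝ => f (x + t • s)) (f' s) t := by
  have hline : HasDerivAt (fun t : ℝ => x + t • s) s t := by
    simpa using ((hasDerivAt_id t).smul_const s).const_add x
  exact hf.comp_hasDerivAt t hline

theorem norm_sub_sub_fderiv_le_of_lipschitz_fderiv {f : E → F} {f' : E → E →L[ℝ] F} {L : ℝ} {x : E}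
    (hf : ∀ y, HasFDerivAt f (f' y) y) (hL : ∀ y, ‖f' y - f' x‖ ≤ L * ‖y - x‖) (s : E) :
    ‖f (x + s) - f x - f' x s‖ ≤ L / 2 * ‖s‖ ^ 2 := by
  have hderiv : ∀ t : ℝ, HasDerivAt (fun t : ℝ => f (x + t • s) - f x - t • f' x s)
      (f' (x + t • s) s - f' x s) t := fun t =>
    ((hf (x + t • s)).hasDerivAt_comp_add_smul.sub_const (f x)).sub
      (((hasDerivAt_id t).smul_const (f' x s)).congr_deriv (one_smul ℝ _))
  have hbound : ∀ t ∈ Set.Ico (0 : ℝ) 1, ‖f' (x + t • s) s - f' x s‖ ≤ L * t * ‖s‖ ^ 2 := by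
    intro t ht
    calc ‖f' (x + t • s) s - f' x s‖ ≤ ‖f' (x + t • s) - f' x‖ * ‖s‖ := by
          rw [← sub_apply]; exact (f' (x + t • s) - f' x).le_opNorm s
      _ ≤ L * ‖t • s‖ * ‖s‖ := by
          gcongr; simpa using hL (x + t • s)
      _ = L * t * ‖s‖ ^ 2 := by
          rw [norm_smul, Real.norm_of_nonneg ht.1]; ring
  have := image_norm_le_of_norm_deriv_right_le_deriv_boundary (a := 0) (b := 1)
    (B := fun t => L / 2 * t ^ 2 * ‖s‖ ^ 2)
    (fun t _ => (hderiv t).continuousAt.continuousWithinAt)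
    (fun t _ => (hderiv t).hasDerivWithinAt) (by simp)
    (fun t =>
      (((hasDerivAt_pow 2 t).const_mul (L / 2)).mul_const (‖s‖ ^ 2)).congr_deriv (by ring))
    hbound (Set.right_mem_Icc.2 zero_le_one)
  simpa using this

end

section

variable {E : Type*} [NormedAddCommGroup E] [InnerProductSpace ℝ E] [CompleteSpace E]

theorem taylor_remainder_le_of_lipschitz_hessian {f : E → ℝ} {f'' : E → E →L[ℝ] E} {L : ℝ} {x : E}
    (hf : Differentiable ℝ f) (hf'' : ∀ y, HasFDerivAt (gradient f) (f'' y) y)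
    (hL : ∀ y, ‖f'' y - f'' x‖ ≤ L * ‖y - x‖) (s : E) :
    f (x + s) - f x - ⟪gradient f x, s⟫ - 1 / 2 * ⟪f'' x s, s⟫ ≤ L / 6 * ‖s‖ ^ 3 := by
  have hderiv : ∀ t : ℝ, HasDerivAt
      (fun t : ℝ => f (x + t • s) - f x - t * ⟪gradient f x, s⟫ - 1 / 2 * t ^ 2 * ⟪f'' x s, s⟫)
      (⟪gradient f (x + t • s) - gradient f x - f'' x (t • s), s⟫) t := fun t => by
    have hline := (hf (x + t • s)).hasGradientAt.hasFDerivAt.hasDerivAt_comp_add_smul (s := s) (t := t)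
    rw [InnerProductSpace.toDual_apply_apply] at hline
    refine (((hline.sub_const (f x)).sub ((hasDerivAt_id t).mul_const _)).sub
      (((hasDerivAt_pow 2 t).const_mul (1 / 2)).mul_const _)).congr_deriv ?_
    simp only [inner_sub_left, map_smul, real_inner_smul_left]
    ring
  have hbound : ∀ t ∈ Set.Ico (0 : ℝ) 1,
      ⟪gradient f (x + t • s) - gradient f x - f'' x (t • s), s⟫ ≤ L / 2 * t ^ 2 * ‖s‖ ^ 3 := by
    intro t ht
    calc ⟪gradient f (x + t • s) - gradient f x - f'' x (t • s), s⟫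
        ≤ ‖gradient f (x + t • s) - gradient f x - f'' x (t • s)‖ * ‖s‖ := real_inner_le_norm _ _
      _ ≤ L / 2 * ‖t • s‖ ^ 2 * ‖s‖ := by
          gcongr; exact norm_sub_sub_fderiv_le_of_lipschitz_fderiv hf'' hL _
      _ = L / 2 * t ^ 2 * ‖s‖ ^ 3 := by
          rw [norm_smul, Real.norm_of_nonneg ht.1]; ring
  have := image_le_of_deriv_right_le_deriv_boundary (a := 0) (b := 1)
    (B := fun t => L / 6 * t ^ 3 * ‖s‖ ^ 3)
    (fun t _ => (hderiv t).continuousAt.continuousWithinAt)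
    (fun t _ => (hderiv t).hasDerivWithinAt) (by simp)
    (by fun_prop)
    (fun t _ => ((((hasDerivAt_pow 3 t).const_mul (L / 6)).mul_const (‖s‖ ^ 3)).congr_deriv
      (by ring)).hasDerivWithinAt)
    hbound (Set.right_mem_Icc.2 zero_le_one)
  simpa using this

end

theorem sarc_taylor_model_error_general (n : ℕ)
    (φ : EuclideanSpace ℝ (Fin n) → ℝ) (hφ : ContDiff ℝ 2 φ)
    (Hess : EuclideanSpace ℝ (Fin n) →
      EuclideanSpace ℝ (Fin n) →L[ℝ] EuclideanSpace ℝ (Fin n))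
    (hHess : ∀ y, HasFDerivAt (gradient φ) (Hess y) y)
    (L_H : ℝ) (hLH : ∀ y z, ‖Hess y - Hess z‖ ≤ L_H * ‖y - z‖)
    (x s g : EuclideanSpace ℝ (Fin n))
    (H : EuclideanSpace ℝ (Fin n) →L[ℝ] EuclideanSpace ℝ (Fin n))
    (κg κH μ σ : ℝ)
    (hacc_g : ‖gradient φ x - g‖ ≤ κg * max (μ / σ) (‖s‖ ^ 2))
    (hacc_H : ‖(Hess x - H) s‖ ≤ κH * max (μ / σ) (‖s‖ ^ 2)) :
    φ (x + s) - φ x - ⟪g, s⟫ - (1 / 2) * ⟪s, H s⟫ ≤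
      (κg + κH / 2) * max (μ / σ) (‖s‖ ^ 2) * ‖s‖ + (L_H / 2) * ‖s‖ ^ 3 := by
  have htaylor := taylor_remainder_le_of_lipschitz_hessian (hφ.differentiable two_ne_zero) hHess
    (fun y => hLH y x) s
  have hgrad : ⟪gradient φ x - g, s⟫ ≤ κg * max (μ / σ) (‖s‖ ^ 2) * ‖s‖ :=
    (real_inner_le_norm _ _).trans (mul_le_mul_of_nonneg_right hacc_g (norm_nonneg s))
  have hhess : ⟪(Hess x - H) s, s⟫ ≤ κH * max (μ / σ) (‖s‖ ^ 2) * ‖s‖ :=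
    (real_inner_le_norm _ _).trans (mul_le_mul_of_nonneg_right hacc_H (norm_nonneg s))
  rw [inner_sub_left] at hgrad
  rw [sub_apply, inner_sub_left, real_inner_comm s (H s)] at hhess
  have hL : 0 ≤ L_H * ‖s‖ := (norm_nonneg _).trans (by simpa using hLH (x + s) x)
  nlinarith [mul_nonneg hL (sq_nonneg ‖s‖)]

/-- Taylor-type upper bound on the model error: under the gradient/Hessian
accuracy conditions and Lipschitz continuity of the Hessian,
`φ(x+s) − φ(x) − ⟪g, s⟫ − (1/2)⟪s, H s⟫` is bounded by
`(κ_g + κ_H/2)·max{μ/σ, ‖s‖²}·‖s‖ + (L_H/2)‖s‖³`. -/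
theorem sarc_taylor_model_error (n : ℕ) (hn : 1 ≤ n)
    (φ : EuclideanSpace ℝ (Fin n) → ℝ) (hφ : ContDiff ℝ 2 φ)
    (Hess : EuclideanSpace ℝ (Fin n) →
      EuclideanSpace ℝ (Fin n) →L[ℝ] EuclideanSpace ℝ (Fin n))
    (hHess : ∀ y, HasFDerivAt (gradient φ) (Hess y) y)
    (L_H : ℝ) (hLH : ∀ y z, ‖Hess y - Hess z‖ ≤ L_H * ‖y - z‖)
    (x s g : EuclideanSpace ℝ (Fin n))
    (H : EuclideanSpace ℝ (Fin n) →L[ℝ] EuclideanSpace ℝ (Fin n))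
    (hHsym : ∀ u v : EuclideanSpace ℝ (Fin n), ⟪H u, v⟫ = ⟪u, H v⟫)
    (κg κH μ σ : ℝ) (hκg : 0 ≤ κg) (hκH : 0 ≤ κH) (hμ : 0 < μ) (hσ : 0 < σ)
    (hacc_g : ‖gradient φ x - g‖ ≤ κg * max (μ / σ) (‖s‖ ^ 2))
    (hacc_H : ‖(Hess x - H) s‖ ≤ κH * max (μ / σ) (‖s‖ ^ 2)) :
    φ (x + s) - φ x - ⟪g, s⟫ - (1 / 2) * ⟪s, H s⟫ ≤
      (κg + κH / 2) * max (μ / σ) (‖s‖ ^ 2) * ‖s‖ + (L_H / 2) * ‖s‖ ^ 3 :=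
  sarc_taylor_model_error_general n φ hφ Hess hHess L_H hLH x s g H κg κH μ σ hacc_g hacc_H
end

section
/- Let n ≥ 1, let φ : ℝⁿ → ℝ be twice continuously differentiable with L-Lipschitz gradient and L_H-Lipschitz Hessian. Let x, s ∈ ℝⁿ with x⁺ = x + s, g ∈ ℝⁿ, H : ℝⁿ → ℝⁿ symmetric linear, σ > 0, μ > 0, κ_g, κ_H ≥ 0, θ ∈ (0,1), ε_f' > 0, and let f(x), f(x⁺) ∈ ℝ with e = |f(x) − φ(x)|, e⁺ = |f(x⁺) − φ(x⁺)|. Suppose: (a) the accuracy conditions ‖∇φ(x) − g‖ ≤ κ_g·max{μ/σ, ‖s‖²} and ‖(∇²φ(x) − H)s‖ ≤ κ_H·max{μ/σ, ‖s‖²} hold; (b) e + e⁺ ≤ 2ε_f'; (c) s satisfies the step conditions ⟨g, s⟩ + ⟨s, H s⟩ + σ‖s‖³ = 0 and ⟨s, H s⟩ + σ‖s‖³ ≥ 0; (d) σ ≥ σ̄ := (2κ_g + κ_H + L + L_H)/(1 − θ/3); and (e) ‖s‖² ≥ μ/σ. Then the iteration is successful: f(x) − f(x⁺) + 2ε_f'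 ≥ θ·(m(x) − m(x+s)). -/
open RealInnerProductSpace Set

/-!
Taylor's theorem along the segment `[x, x + s]`, with the `L_H`-Lipschitz Hessian, gives
`φ(x + s) ≤ φ(x) + ⟪∇φ(x), s⟫ + ⟪∇²φ(x) s, s⟫ / 2 + L_H ‖s‖³ / 6`. Since `‖s‖² ≥ μ / σ`, the
accuracy conditions replace `∇φ(x)` and `∇²φ(x) s` by `g` and `H s` at a cost of
`(κ_g + κ_H / 2) ‖s‖³`. By the first step condition the model decrease equals
`(⟪s, H s⟫ + σ‖s‖³) / 2 + σ‖s‖³ / 6`, whose first summand is nonnegative by the second one;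
so `φ(x) − φ(x + s)` exceeds `θ` times the model decrease by at least
`(σ (1 − θ / 3) − 2κ_g − κ_H − L_H / 3) ‖s‖³ / 2 ≥ 0`, and the function-value errors cost at
most `2ε_f'`.
-/

theorem le_cubic_of_hasDerivAt_le_quadratic {f f' : ℝ → ℝ} {a b c : ℝ}
    (hf : ∀ t, HasDerivAt f (f' t) t) (bound : ∀ t, 0 ≤ t → f' t ≤ a + b * t + c * t ^ 2)
    {t : ℝ} (ht : 0 ≤ t) : f t ≤ f 0 + a * t + b * t ^ 2 / 2 + c * t ^ 3 / 3 := by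
  have hcubic : ∀ u, HasDerivAt (fun u => f 0 + a * u + b * u ^ 2 / 2 + c * u ^ 3 / 3)
      (a + b * u + c * u ^ 2) u := fun u => by
    refine HasDerivAt.congr_deriv (((((hasDerivAt_id u).const_mul a).const_add (f 0)).add
      (((hasDerivAt_pow 2 u).const_mul b).div_const 2)).add
      (((hasDerivAt_pow 3 u).const_mul c).div_const 3)) ?_
    simp only [Nat.cast_ofNat]
    ring
  exact image_le_of_deriv_right_le_deriv_boundary (a := 0) (b := t)
    (fun u _ => (hf u).continuousAt.continuousWithinAt)
    (fun u _ => (hf u).hasDerivWithinAt) (by simp)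
    (fun u _ => (hcubic u).continuousAt.continuousWithinAt)
    (fun u _ => (hcubic u).hasDerivWithinAt) (fun u hu => bound u hu.1) ⟨ht, le_rfl⟩

theorem mul_norm_cube_nonneg_of_norm_sub_le {E F : Type*} [SeminormedAddCommGroup E]
    [SeminormedAddCommGroup F] {f : E → F} {K : ℝ} (hf : ∀ y z, ‖f y - f z‖ ≤ K * ‖y - z‖)
    (s : E) : 0 ≤ K * ‖s‖ ^ 3 := by
  have hK : 0 ≤ K * ‖s‖ := by simpa using (norm_nonneg _).trans (hf s 0)
  calc 0 ≤ K * ‖s‖ * ‖s‖ ^ 2 := by positivity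
    _ = K * ‖s‖ ^ 3 := by ring

section

variable {E : Type*} [NormedAddCommGroup E] [InnerProductSpace ℝ E]

theorem inner_le_of_norm_le_mul_sq {u s : E} {κ : ℝ} (h : ‖u‖ ≤ κ * ‖s‖ ^ 2) :
    ⟪u, s⟫ ≤ κ * ‖s‖ ^ 3 :=
  calc ⟪u, s⟫ ≤ ‖u‖ * ‖s‖ := real_inner_le_norm u s
    _ ≤ κ * ‖s‖ ^ 2 * ‖s‖ := by gcongr
    _ = κ * ‖s‖ ^ 3 := by ring

variable [CompleteSpace E]

theorem le_taylor_of_lipschitz_hessian {φ : E → ℝ} {Hess : E → E →L[ℝ] E} {L_H : ℝ}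
    (hφ : Differentiable ℝ φ) (hHess : ∀ y, HasFDerivAt (gradient φ) (Hess y) y)
    (hLH : ∀ y z, ‖Hess y - Hess z‖ ≤ L_H * ‖y - z‖) (x s : E) :
    φ (x + s) ≤ φ x + ⟪gradient φ x, s⟫ + ⟪Hess x s, s⟫ / 2 + L_H * ‖s‖ ^ 3 / 6 := by
  have hline : ∀ t : ℝ, HasDerivAt (fun t : ℝ => x + t • s) s t := fun t => by
    simpa using ((hasDerivAt_id t).smul_const s).const_add x
  have hψ : ∀ t : ℝ, HasDerivAt (fun t => φ (x + t • s)) ⟪gradient φ (x + t • s), s⟫ t :=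
    fun t => by
      rw [inner_gradient_left]
      exact (hφ _).hasFDerivAt.comp_hasDerivAt t (hline t)
  have hψ' : ∀ t : ℝ, HasDerivAt (fun t => ⟪gradient φ (x + t • s), s⟫)
      ⟪Hess (x + t • s) s, s⟫ t := fun t => by
    simpa using ((hHess _).comp_hasDerivAt t (hline t)).inner ℝ (hasDerivAt_const t s)
  have hψ'' : ∀ t, 0 ≤ t → ⟪Hess (x + t • s) s, s⟫ ≤ ⟪Hess x s, s⟫ + L_H * ‖s‖ ^ 3 * t :=
    fun t ht => by
      have : ⟪(Hess (x + t • s) - Hess x) s, s⟫ ≤ L_H * ‖s‖ ^ 3 * t :=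
        calc ⟪(Hess (x + t • s) - Hess x) s, s⟫
            ≤ ‖Hess (x + t • s) - Hess x‖ * ‖s‖ * ‖s‖ :=
              (real_inner_le_norm _ _).trans (by gcongr; exact ContinuousLinearMap.le_opNorm _ _)
          _ ≤ L_H * ‖t • s‖ * ‖s‖ * ‖s‖ := by gcongr; simpa using hLH (x + t • s) x
          _ = L_H * ‖s‖ ^ 3 * t := by rw [norm_smul, Real.norm_of_nonneg ht]; ring
      rwa [sub_apply, inner_sub_left, sub_le_iff_le_add'] at this
  have hgrad_bound : ∀ t, 0 ≤ t → ⟪gradient φ (x + t • s), s⟫ ≤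
      ⟪gradient φ x, s⟫ + ⟪Hess x s, s⟫ * t + L_H * ‖s‖ ^ 3 / 2 * t ^ 2 := fun t ht => by
    have := le_cubic_of_hasDerivAt_le_quadratic hψ' (a := ⟪Hess x s, s⟫)
      (b := L_H * ‖s‖ ^ 3) (c := 0)
      (fun u hu => by simpa only [zero_mul, add_zero] using hψ'' u hu) ht
    simp only [zero_smul, add_zero, zero_mul, zero_div] at this
    linarith
  have := le_cubic_of_hasDerivAt_le_quadratic hψ hgrad_bound zero_le_one
  simp only [zero_smul, add_zero, one_smul, one_pow, mul_one] at this
  linarith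

end

theorem sarc_large_sigma_successful_general (n : ℕ)
    (φ : EuclideanSpace ℝ (Fin n) → ℝ) (hφ : ContDiff ℝ 2 φ)
    (Hess : EuclideanSpace ℝ (Fin n) →
      EuclideanSpace ℝ (Fin n) →L[ℝ] EuclideanSpace ℝ (Fin n))
    (hHess : ∀ y, HasFDerivAt (gradient φ) (Hess y) y)
    (L L_H : ℝ)
    (hL : ∀ y z, ‖gradient φ y - gradient φ z‖ ≤ L * ‖y - z‖)
    (hLH : ∀ y z, ‖Hess y - Hess z‖ ≤ L_H * ‖y - z‖)
    (x s g : EuclideanSpace ℝ (Fin n))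
    (H : EuclideanSpace ℝ (Fin n) →L[ℝ] EuclideanSpace ℝ (Fin n))
    (σ μ κg κH θ εf' fx fxp : ℝ)
    (hθ : θ ∈ Set.Ioo (0 : ℝ) 1)
    (hacc_g : ‖gradient φ x - g‖ ≤ κg * max (μ / σ) (‖s‖ ^ 2))
    (hacc_H : ‖(Hess x - H) s‖ ≤ κH * max (μ / σ) (‖s‖ ^ 2))
    (herr : |fx - φ x| + |fxp - φ (x + s)| ≤ 2 * εf')
    (hstep1 : ⟪g, s⟫ + ⟪s, H s⟫ + σ * ‖s‖ ^ 3 = 0)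
    (hstep2 : ⟪s, H s⟫ + σ * ‖s‖ ^ 3 ≥ 0)
    (hσbig : σ ≥ (2 * κg + κH + L + L_H) / (1 - θ / 3))
    (hsbig : ‖s‖ ^ 2 ≥ μ / σ) :
    fx - fxp + 2 * εf' ≥
      θ * (-(⟪g, s⟫ + (1 / 2) * ⟪s, H s⟫ + (σ / 3) * ‖s‖ ^ 3)) := by
  rw [max_eq_right hsbig] at hacc_g hacc_H
  have htaylor := le_taylor_of_lipschitz_hessian (hφ.differentiable two_ne_zero) hHess hLH x s
  have hgrad : ⟪gradient φ x, s⟫ ≤ ⟪g, s⟫ + κg * ‖s‖ ^ 3 := by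
    have := inner_le_of_norm_le_mul_sq hacc_g
    rw [inner_sub_left] at this
    linarith
  have hhess : ⟪Hess x s, s⟫ ≤ ⟪s, H s⟫ + κH * ‖s‖ ^ 3 := by
    have := inner_le_of_norm_le_mul_sq hacc_H
    rw [sub_apply, inner_sub_left, real_inner_comm s (H s)] at this
    linarith
  have hfun : φ x - φ (x + s) ≤ fx - fxp + 2 * εf' := by
    linarith [neg_abs_le (fx - φ x), le_abs_self (fxp - φ (x + s))]
  have hσ : 2 * κg + κH + L + L_H ≤ σ * (1 - θ / 3) :=
    (div_le_iff₀ (by linarith [hθ.2])).1 hσbig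
  have hs3 : 0 ≤ ‖s‖ ^ 3 := by positivity
  linarith [mul_le_mul_of_nonneg_right hσ hs3, mul_nonneg (sub_nonneg.2 hθ.2.le) hstep2,
    congrArg (θ * ·) hstep1, mul_norm_cube_nonneg_of_norm_sub_le hL s,
    mul_norm_cube_nonneg_of_norm_sub_le hLH s]

/-- Large `σ` guarantees success (unless the step is very small): on a true
iteration with `σ ≥ σ̄ = (2κ_g + κ_H + L + L_H)/(1 − θ/3)` and `‖s‖² ≥ μ/σ`,
the acceptance test `f(x) − f(x⁺) + 2ε_f' ≥ θ·(m(x) − m(x+s))` holds. -/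
theorem sarc_large_sigma_successful (n : ℕ) (hn : 1 ≤ n)
    (φ : EuclideanSpace ℝ (Fin n) → ℝ) (hφ : ContDiff ℝ 2 φ)
    (Hess : EuclideanSpace ℝ (Fin n) →
      EuclideanSpace ℝ (Fin n) →L[ℝ] EuclideanSpace ℝ (Fin n))
    (hHess : ∀ y, HasFDerivAt (gradient φ) (Hess y) y)
    (L L_H : ℝ)
    (hL : ∀ y z, ‖gradient φ y - gradient φ z‖ ≤ L * ‖y - z‖)
    (hLH : ∀ y z, ‖Hess y - Hess z‖ ≤ L_H * ‖y - z‖)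
    (x s g : EuclideanSpace ℝ (Fin n))
    (H : EuclideanSpace ℝ (Fin n) →L[ℝ] EuclideanSpace ℝ (Fin n))
    (hHsym : ∀ u v : EuclideanSpace ℝ (Fin n), ⟪H u, v⟫ = ⟪u, H v⟫)
    (σ μ κg κH θ εf' fx fxp : ℝ)
    (hσ : 0 < σ) (hμ : 0 < μ) (hκg : 0 ≤ κg) (hκH : 0 ≤ κH)
    (hθ : θ ∈ Set.Ioo (0 : ℝ) 1) (hεf' : 0 < εf')
    (hacc_g : ‖gradient φ x - g‖ ≤ κg * max (μ / σ) (‖s‖ ^ 2))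
    (hacc_H : ‖(Hess x - H) s‖ ≤ κH * max (μ / σ) (‖s‖ ^ 2))
    (herr : |fx - φ x| + |fxp - φ (x + s)| ≤ 2 * εf')
    (hstep1 : ⟪g, s⟫ + ⟪s, H s⟫ + σ * ‖s‖ ^ 3 = 0)
    (hstep2 : ⟪s, H s⟫ + σ * ‖s‖ ^ 3 ≥ 0)
    (hσbig : σ ≥ (2 * κg + κH + L + L_H) / (1 - θ / 3))
    (hsbig : ‖s‖ ^ 2 ≥ μ / σ) :
    fx - fxp + 2 * εf' ≥
      θ * (-(⟪g, s⟫ + (1 / 2) * ⟪s, H s⟫ + (σ / 3) * ‖s‖ ^ 3)) :=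
  sarc_large_sigma_successful_general n φ hφ Hess hHess L L_H hL hLH x s g H σ μ κg κH θ εf' fx fxp
    hθ hacc_g hacc_H herr hstep1 hstep2 hσbig hsbig
end

section
/- Let n ≥ 1, let φ : ℝⁿ → ℝ be twice continuously differentiable with L_H-Lipschitz Hessian, let x, s ∈ ℝⁿ, let g ∈ ℝⁿ and H : ℝⁿ → ℝⁿ symmetric linear satisfy the accuracy conditions ‖∇φ(x) − g‖ ≤ κ_g·max{μ/σ, ‖s‖²} and ‖(∇²φ(x) − H)s‖ ≤ κ_H·max{μ/σ, ‖s‖²}, where κ_g, κ_H ≥ 0 and μ, σ > 0. Then ‖∇φ(x+s) − g − H s‖ ≤ (κ_g + κ_H)·max{μ/σ, ‖s‖²} + (L_H/2)‖s‖². -/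
open RealInnerProductSpace

/- The first-order Taylor remainder `r t = f (x + t • s) - f x - t • f' x s` vanishes at `0` and
has derivative `(f' (x + t • s) - f' x) s`, of norm at most `L t ‖s‖²`; comparing with
`B t = L t² ‖s‖² / 2` bounds `‖r 1‖` by `L ‖s‖² / 2`. The remaining two error terms are the
accuracy conditions, and the triangle inequality adds the three. -/

theorem norm_sub_sub_fderiv_apply_le_of_lipschitz_fderiv
    {E F : Type*} [NormedAddCommGroup E] [NormedSpace ℝ E]
    [NormedAddCommGroup F] [NormedSpace ℝ F]
    {f : E → F} {f' : E → E →L[ℝ] F} {L : ℝ} (x s : E)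
    (hf : ∀ y, HasFDerivAt f (f' y) y) (hL : ∀ y, ‖f' y - f' x‖ ≤ L * ‖y - x‖) :
    ‖f (x + s) - f x - f' x s‖ ≤ L / 2 * ‖s‖ ^ 2 := by
  have hr : ∀ t : ℝ, HasDerivAt (fun t : ℝ => f (x + t • s) - f x - t • f' x s)
      ((f' (x + t • s) - f' x) s) t := fun t => by
    have hpath : HasDerivAt (fun t : ℝ => x + t • s) s t := by
      simpa using ((hasDerivAt_id t).smul_const s).const_add x
    have hlin : HasDerivAt (fun t : ℝ => t • f' x s) (f' x s) t := by
      simpa using (hasDerivAt_id t).smul_const (f' x s)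
    rw [sub_apply]
    exact (((hf _).comp_hasDerivAt t hpath).sub_const (f x)).sub hlin
  have hB : ∀ t : ℝ, HasDerivAt (fun t => L / 2 * ‖s‖ ^ 2 * t ^ 2) (L * ‖s‖ ^ 2 * t) t :=
    fun t => ((hasDerivAt_pow 2 t).const_mul (L / 2 * ‖s‖ ^ 2)).congr_deriv (by norm_num; ring)
  have hr' : ∀ t ∈ Set.Ico (0 : ℝ) 1, ‖(f' (x + t • s) - f' x) s‖ ≤ L * ‖s‖ ^ 2 * t := by
    rintro t ⟨ht, -⟩
    calc ‖(f' (x + t • s) - f' x) s‖ ≤ ‖f' (x + t • s) - f' x‖ * ‖s‖ :=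
          ContinuousLinearMap.le_opNorm _ _
      _ ≤ L * ‖x + t • s - x‖ * ‖s‖ := by gcongr; exact hL _
      _ = L * ‖s‖ ^ 2 * t := by
          rw [add_sub_cancel_left, norm_smul, Real.norm_of_nonneg ht]; ring
  simpa using image_norm_le_of_norm_deriv_right_le_deriv_boundary
    (fun t _ => (hr t).continuousAt.continuousWithinAt) (fun t _ => (hr t).hasDerivWithinAt)
    (by simp) hB hr' (Set.right_mem_Icc.2 zero_le_one)

theorem sarc_model_gradient_error_general (n : ℕ)
    (φ : EuclideanSpace ℝ (Fin n) → ℝ)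
    (Hess : EuclideanSpace ℝ (Fin n) →
      EuclideanSpace ℝ (Fin n) →L[ℝ] EuclideanSpace ℝ (Fin n))
    (hHess : ∀ y, HasFDerivAt (gradient φ) (Hess y) y)
    (L_H : ℝ) (hLH : ∀ y z, ‖Hess y - Hess z‖ ≤ L_H * ‖y - z‖)
    (x s g : EuclideanSpace ℝ (Fin n))
    (H : EuclideanSpace ℝ (Fin n) →L[ℝ] EuclideanSpace ℝ (Fin n))
    (κg κH μ σ : ℝ)
    (hacc_g : ‖gradient φ x - g‖ ≤ κg * max (μ / σ) (‖s‖ ^ 2))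
    (hacc_H : ‖(Hess x - H) s‖ ≤ κH * max (μ / σ) (‖s‖ ^ 2)) :
    ‖gradient φ (x + s) - g - H s‖ ≤
      (κg + κH) * max (μ / σ) (‖s‖ ^ 2) + (L_H / 2) * ‖s‖ ^ 2 := by
  have htaylor := norm_sub_sub_fderiv_apply_le_of_lipschitz_fderiv x s hHess (hLH · x)
  have hsplit : gradient φ (x + s) - g - H s
      = (gradient φ (x + s) - gradient φ x - Hess x s) + (gradient φ x - g) + (Hess x - H) s := by
    rw [sub_apply]; abel
  calc ‖gradient φ (x + s) - g - H s‖
      ≤ ‖gradient φ (x + s) - gradient φ x - Hess x s‖ + ‖gradient φ x - g‖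
        + ‖(Hess x - H) s‖ := hsplit ▸ norm_add₃_le
    _ ≤ (κg + κH) * max (μ / σ) (‖s‖ ^ 2) + (L_H / 2) * ‖s‖ ^ 2 := by linarith

/-- Bound on the error of the model gradient at the trial point: under the
accuracy conditions and Lipschitz continuity of the Hessian,
`‖∇φ(x+s) − g − H s‖ ≤ (κ_g + κ_H)·max{μ/σ, ‖s‖²} + (L_H/2)‖s‖²`. -/
theorem sarc_model_gradient_error (n : ℕ) (hn : 1 ≤ n)
    (φ : EuclideanSpace ℝ (Fin n) → ℝ) (hφ : ContDiff ℝ 2 φ)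
    (Hess : EuclideanSpace ℝ (Fin n) →
      EuclideanSpace ℝ (Fin n) →L[ℝ] EuclideanSpace ℝ (Fin n))
    (hHess : ∀ y, HasFDerivAt (gradient φ) (Hess y) y)
    (L_H : ℝ) (hLH : ∀ y z, ‖Hess y - Hess z‖ ≤ L_H * ‖y - z‖)
    (x s g : EuclideanSpace ℝ (Fin n))
    (H : EuclideanSpace ℝ (Fin n) →L[ℝ] EuclideanSpace ℝ (Fin n))
    (hHsym : ∀ u v : EuclideanSpace ℝ (Fin n), ⟪H u, v⟫ = ⟪u, H v⟫)
    (κg κH μ σ : ℝ) (hκg : 0 ≤ κg) (hκH : 0 ≤ κH) (hμ : 0 < μ) (hσ : 0 < σ)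
    (hacc_g : ‖gradient φ x - g‖ ≤ κg * max (μ / σ) (‖s‖ ^ 2))
    (hacc_H : ‖(Hess x - H) s‖ ≤ κH * max (μ / σ) (‖s‖ ^ 2)) :
    ‖gradient φ (x + s) - g - H s‖ ≤
      (κg + κH) * max (μ / σ) (‖s‖ ^ 2) + (L_H / 2) * ‖s‖ ^ 2 :=
  sarc_model_gradient_error_general n φ Hess hHess L_H hLH x s g H κg κH μ σ hacc_g hacc_H
end

section
/- Let n ≥ 1, let φ : ℝⁿ → ℝ be twice continuously differentiable with L-Lipschitz gradient and L_H-Lipschitz Hessian. Let x, s ∈ ℝⁿ, g ∈ ℝⁿ, H : ℝⁿ → ℝⁿ symmetric linear, σ > 0, μ > 0, κ_g, κ_H ≥ 0, η ∈ (0,1), θ ∈ (0,1). Suppose: (a) the accuracy conditions ‖∇φ(x) − g‖ ≤ κ_g·max{μ/σ, ‖s‖²} and ‖(∇²φ(x) − H)s‖ ≤ κ_H·max{μ/σ, ‖s‖²} hold, and (b) the termination condition ‖g + H s + σ‖s‖·s‖ ≤ η·min{1, ‖s‖}·‖g‖ holds. Then max{‖s‖², μ/σ} ≥ (1 − η)·‖∇φ(x+s)‖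 / (σ + (1 − θ/3)·σ̄), where σ̄ = (2κ_g + κ_H + L + L_H)/(1 − θ/3). -/
open RealInnerProductSpace

set_option maxHeartbeats 2000000 in
/-- Lower bound on the step norm in terms of `‖∇φ(x+s)‖` on true iterations:
under the accuracy conditions and the model termination condition,
`max{‖s‖², μ/σ} ≥ (1 − η)‖∇φ(x+s)‖ / (σ + (1 − θ/3)σ̄)` with
`σ̄ = (2κ_g + κ_H + L + L_H)/(1 − θ/3)`. -/
theorem sarc_step_lower_bound (n : ℕ) (hn : 1 ≤ n)
    (φ : EuclideanSpace ℝ (Fin n) → ℝ) (hφ : ContDiff ℝ 2 φ)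
    (Hess : EuclideanSpace ℝ (Fin n) →
      EuclideanSpace ℝ (Fin n) →L[ℝ] EuclideanSpace ℝ (Fin n))
    (hHess : ∀ y, HasFDerivAt (gradient φ) (Hess y) y)
    (L L_H : ℝ)
    (hL : ∀ y z, ‖gradient φ y - gradient φ z‖ ≤ L * ‖y - z‖)
    (hLH : ∀ y z, ‖Hess y - Hess z‖ ≤ L_H * ‖y - z‖)
    (x s g : EuclideanSpace ℝ (Fin n))
    (H : EuclideanSpace ℝ (Fin n) →L[ℝ] EuclideanSpace ℝ (Fin n))
    (hHsym : ∀ u v : EuclideanSpace ℝ (Fin n), ⟪H u, v⟫ = ⟪u, H v⟫)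
    (σ μ κg κH η θ σbar : ℝ)
    (hσ : 0 < σ) (hμ : 0 < μ) (hκg : 0 ≤ κg) (hκH : 0 ≤ κH)
    (hη : η ∈ Set.Ioo (0 : ℝ) 1) (hθ : θ ∈ Set.Ioo (0 : ℝ) 1)
    (hσbar : σbar = (2 * κg + κH + L + L_H) / (1 - θ / 3))
    (hacc_g : ‖gradient φ x - g‖ ≤ κg * max (μ / σ) (‖s‖ ^ 2))
    (hacc_H : ‖(Hess x - H) s‖ ≤ κH * max (μ / σ) (‖s‖ ^ 2))
    (hterm : ‖g + H s + (σ * ‖s‖) • s‖ ≤ η * min 1 ‖s‖ * ‖g‖) :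
    max (‖s‖ ^ 2) (μ / σ) ≥
      (1 - η) * ‖gradient φ (x + s)‖ / (σ + (1 - θ / 3) * σbar) := by
  obtain ⟨hη0, hη1⟩ := hη
  obtain ⟨hθ0, hθ1⟩ := hθ
  set ns := ‖s‖ with hns
  set M := max (‖s‖ ^ 2) (μ / σ) with hM
  set G := ‖gradient φ (x + s)‖ with hG
  have hns0 : 0 ≤ ns := norm_nonneg s
  have hG0 : 0 ≤ G := norm_nonneg _
  have hg0 : 0 ≤ ‖g‖ := norm_nonneg g
  have hsM : ns ^ 2 ≤ M := le_max_left _ _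
  have hM0 : 0 ≤ M := le_trans (sq_nonneg _) hsM
  have hmaxcomm : max (μ / σ) (‖s‖ ^ 2) = M := max_comm _ _
  rw [hmaxcomm] at hacc_g hacc_H
  have hθ3 : (0 : ℝ) < 1 - θ / 3 := by linarith
  -- nonnegativity of L and L_H
  have hone : ‖(EuclideanSpace.single (⟨0, hn⟩ : Fin n) (1 : ℝ)) - 0‖ = 1 := by
    simp
  have hL0 : 0 ≤ L := by
    have h := hL (EuclideanSpace.single (⟨0, hn⟩ : Fin n) (1 : ℝ)) 0
    rw [hone, mul_one] at h
    exact le_trans (norm_nonneg _) h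
  have hLH0 : 0 ≤ L_H := by
    have h := hLH (EuclideanSpace.single (⟨0, hn⟩ : Fin n) (1 : ℝ)) 0
    rw [hone, mul_one] at h
    exact le_trans (norm_nonneg _) h
  -- Taylor-type bound via mean value inequality
  have htaylor : ‖gradient φ (x + s) - gradient φ x - Hess x s‖ ≤ L_H * ns ^ 2 := by
    have hseg : Convex ℝ (segment ℝ x (x + s)) := convex_segment x (x + s)
    have hder : ∀ y ∈ segment ℝ x (x + s),
        HasFDerivWithinAt (fun y => gradient φ y - Hess x y) (Hess y - Hess x)
          (segment ℝ x (x + s)) y := fun y _ =>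
      ((hHess y).sub ((Hess x).hasFDerivAt)).hasFDerivWithinAt
    have hbd : ∀ y ∈ segment ℝ x (x + s), ‖Hess y - Hess x‖ ≤ L_H * ns := by
      intro y hy
      refine (hLH y x).trans ?_
      have hyx : ‖y - x‖ ≤ ns := by
        obtain ⟨a, b, ha, hb, hab, rfl⟩ := hy
        have he : a • x + b • (x + s) - x = b • s := by
          rw [smul_add, show a = 1 - b from by linarith, sub_smul, one_smul]
          abel
        rw [he, norm_smul, Real.norm_of_nonneg hb]
        nlinarith
      nlinarith
    have key := hseg.norm_image_sub_le_of_norm_hasFDerivWithin_le hder hbd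
      (left_mem_segment ℝ x (x + s)) (right_mem_segment ℝ x (x + s))
    have h1 : x + s - x = s := by abel
    rw [h1] at key
    have h2 : (fun y => gradient φ y - Hess x y) (x + s)
        - (fun y => gradient φ y - Hess x y) x
        = gradient φ (x + s) - gradient φ x - Hess x s := by
      simp only [map_add]
      abel
    rw [h2] at key
    calc ‖gradient φ (x + s) - gradient φ x - Hess x s‖ ≤ L_H * ns * ns := key
      _ = L_H * ns ^ 2 := by ring
  -- decomposition of the gradient at x + s
  have hdecomp : gradient φ (x + s) =
      (gradient φ (x + s) - gradient φ x - Hess x s) + ((Hess x - H) s)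
      + (gradient φ x - g) + (g + H s + (σ * ‖s‖) • s) - (σ * ‖s‖) • s := by
    simp only [ContinuousLinearMap.sub_apply]
    abel
  have hnsmul : ‖(σ * ‖s‖) • s‖ = σ * ns ^ 2 := by
    rw [norm_smul, Real.norm_of_nonneg (by positivity)]
    ring
  have key1 : G ≤ ‖gradient φ (x + s) - gradient φ x - Hess x s‖ + ‖(Hess x - H) s‖
      + ‖gradient φ x - g‖ + ‖g + H s + (σ * ‖s‖) • s‖ + σ * ns ^ 2 := by
    rw [hG]
    nth_rewrite 1 [hdecomp]
    refine le_trans (norm_sub_le _ _) ?_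
    rw [hnsmul]
    have := norm_add_le (gradient φ (x + s) - gradient φ x - Hess x s + (Hess x - H) s
      + (gradient φ x - g)) (g + H s + (σ * ‖s‖) • s)
    have h2 := norm_add_le (gradient φ (x + s) - gradient φ x - Hess x s + (Hess x - H) s)
      (gradient φ x - g)
    have h3 := norm_add_le (gradient φ (x + s) - gradient φ x - Hess x s) ((Hess x - H) s)
    linarith
  have key : G ≤ L_H * ns ^ 2 + κH * M + κg * M + η * min 1 ns * ‖g‖ + σ * ns ^ 2 := by
    linarith [key1, htaylor, hacc_H, hacc_g, hterm]
  -- bound on ‖g‖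
  have hgb : ‖g‖ ≤ G + L * ns + κg * M := by
    have h2 : ‖gradient φ x‖ ≤ G + L * ns := by
      have hx : ‖x - (x + s)‖ = ns := by
        rw [show x - (x + s) = -s from by abel, norm_neg]
      have h := hL x (x + s)
      rw [hx] at h
      calc ‖gradient φ x‖ = ‖gradient φ (x + s) + (gradient φ x - gradient φ (x + s))‖ := by
            congr 1; abel
        _ ≤ G + ‖gradient φ x - gradient φ (x + s)‖ := norm_add_le _ _
        _ ≤ G + L * ns := by linarith
    calc ‖g‖ = ‖gradient φ x - (gradient φ x - g)‖ := by congr 1; abel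
      _ ≤ ‖gradient φ x‖ + ‖gradient φ x - g‖ := norm_sub_le _ _
      _ ≤ G + L * ns + κg * M := by linarith
  -- min facts
  have ht1 : min 1 ns ≤ 1 := min_le_left _ _
  have ht0 : 0 ≤ min 1 ns := le_min zero_le_one hns0
  have htns : min 1 ns * ns ≤ ns ^ 2 := by
    have := mul_le_mul_of_nonneg_right (min_le_right 1 ns) hns0
    calc min 1 ns * ns ≤ ns * ns := this
      _ = ns ^ 2 := (sq ns).symm
  -- bound the termination term
  have h5 : η * min 1 ns * ‖g‖ ≤ η * G + L * ns ^ 2 + κg * M := by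
    have a1 : η * min 1 ns * ‖g‖ ≤ η * min 1 ns * (G + L * ns + κg * M) :=
      mul_le_mul_of_nonneg_left hgb (by positivity)
    have a2 : η * min 1 ns * G ≤ η * G := by
      have := mul_le_mul_of_nonneg_right
        (mul_le_mul_of_nonneg_left ht1 hη0.le) hG0
      calc η * min 1 ns * G ≤ η * 1 * G := this
        _ = η * G := by ring
    have a3 : η * min 1 ns * (L * ns) ≤ L * ns ^ 2 := by
      nlinarith [mul_nonneg hL0 (mul_nonneg ht0 hns0),
        mul_le_mul_of_nonneg_left htns hL0]
    have a4 : η * min 1 ns * (κg * M) ≤ κg * M := by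
      have h1 : η * min 1 ns ≤ 1 * 1 := mul_le_mul hη1.le ht1 ht0 zero_le_one
      have := mul_le_mul_of_nonneg_right (h1.trans_eq (one_mul 1))
        (mul_nonneg hκg hM0)
      calc η * min 1 ns * (κg * M) ≤ 1 * (κg * M) := this
        _ = κg * M := one_mul _
    nlinarith
  -- main inequality
  have hmain : (1 - η) * G ≤ M * (σ + 2 * κg + κH + L + L_H) := by
    have hc : (L_H + L + σ) * ns ^ 2 ≤ (L_H + L + σ) * M :=
      mul_le_mul_of_nonneg_left hsM (by linarith)
    linarith [key, h5, hc]
  -- conclude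
  have hX : (1 - θ / 3) * σbar = 2 * κg + κH + L + L_H := by
    rw [hσbar, mul_comm, div_mul_cancel₀ _ hθ3.ne']
  have hD : 0 < σ + (1 - θ / 3) * σbar := by
    rw [hX]; linarith
  rw [ge_iff_le, div_le_iff₀ hD, hX]
  linarith [hmain]
end

section
/- Let n ≥ 1, let φ : ℝⁿ → ℝ be twice continuously differentiable with L-Lipschitz gradient and L_H-Lipschitz Hessian. Let x, s ∈ ℝⁿ, g ∈ ℝⁿ, H : ℝⁿ → ℝⁿ symmetric linear, κ_g, κ_H ≥ 0, η ∈ (0,1), θ ∈ (0,1), σ_min > 0, σ ≥ σ_min, μ > 0, ε > 0, and set σ̄ = (2κ_g + κ_H + L + L_H)/(1 − θ/3). Suppose: (a) μ ≤ (1 − η)·ε / (1 + (1 − θ/3)·σ̄/σ_min); (b) the accuracy conditions ‖∇φ(x) − g‖ ≤ κ_g·max{μ/σ, ‖s‖²} and ‖(∇²φ(x) − H)s‖ ≤ κ_H·max{μ/σ, ‖s‖²} hold; (c) the termination condition ‖g + H s + σ‖s‖·s‖ ≤ η·min{1, ‖s‖}·‖g‖ holds; and (d) ‖∇φ(x+s)‖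 > ε. Then ‖s‖² ≥ μ/σ. -/
open RealInnerProductSpace

set_option maxHeartbeats 1000000

/-- Lower bound on the step norm until `ε`-accuracy is reached: on a true
iteration where the termination condition holds and `‖∇φ(x+s)‖ > ε`, if `μ`
satisfies the accuracy relation, then `‖s‖² ≥ μ/σ`. -/
theorem sarc_step_not_too_small (n : ℕ) (hn : 1 ≤ n)
    (φ : EuclideanSpace ℝ (Fin n) → ℝ) (hφ : ContDiff ℝ 2 φ)
    (Hess : EuclideanSpace ℝ (Fin n) →
      EuclideanSpace ℝ (Fin n) →L[ℝ] EuclideanSpace ℝ (Fin n))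
    (hHess : ∀ y, HasFDerivAt (gradient φ) (Hess y) y)
    (L L_H : ℝ)
    (hL : ∀ y z, ‖gradient φ y - gradient φ z‖ ≤ L * ‖y - z‖)
    (hLH : ∀ y z, ‖Hess y - Hess z‖ ≤ L_H * ‖y - z‖)
    (x s g : EuclideanSpace ℝ (Fin n))
    (H : EuclideanSpace ℝ (Fin n) →L[ℝ] EuclideanSpace ℝ (Fin n))
    (hHsym : ∀ u v : EuclideanSpace ℝ (Fin n), ⟪H u, v⟫ = ⟪u, H v⟫)
    (κg κH η θ σmin σ μ ε σbar : ℝ)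
    (hκg : 0 ≤ κg) (hκH : 0 ≤ κH)
    (hη : η ∈ Set.Ioo (0 : ℝ) 1) (hθ : θ ∈ Set.Ioo (0 : ℝ) 1)
    (hσmin : 0 < σmin) (hσ : σ ≥ σmin) (hμ : 0 < μ) (hε : 0 < ε)
    (hσbar : σbar = (2 * κg + κH + L + L_H) / (1 - θ / 3))
    (hμle : μ ≤ (1 - η) * ε / (1 + (1 - θ / 3) * σbar / σmin))
    (hacc_g : ‖gradient φ x - g‖ ≤ κg * max (μ / σ) (‖s‖ ^ 2))
    (hacc_H : ‖(Hess x - H) s‖ ≤ κH * max (μ / σ) (‖s‖ ^ 2))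
    (hterm : ‖g + H s + (σ * ‖s‖) • s‖ ≤ η * min 1 ‖s‖ * ‖g‖)
    (hgrad : ‖gradient φ (x + s)‖ > ε) :
    ‖s‖ ^ 2 ≥ μ / σ := by
  by_contra hcon
  push_neg at hcon
  have hσpos : 0 < σ := lt_of_lt_of_le hσmin hσ
  have hμσ : 0 < μ / σ := div_pos hμ hσpos
  have hi : (0 : ℕ) < n := hn
  set u : EuclideanSpace ℝ (Fin n) := EuclideanSpace.single ⟨0, hi⟩ (1 : ℝ) with hu
  have hunorm : ‖u - 0‖ = 1 := by simp [hu, EuclideanSpace.norm_single]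
  have hL0 : 0 ≤ L := by
    have h1 := hL u 0
    rw [hunorm] at h1
    nlinarith [norm_nonneg (gradient φ u - gradient φ 0)]
  have hLH0 : 0 ≤ L_H := by
    have h1 := hLH u 0
    rw [hunorm] at h1
    nlinarith [norm_nonneg (Hess u - Hess 0)]
  have hmax : max (μ / σ) (‖s‖ ^ 2) = μ / σ := max_eq_left hcon.le
  rw [hmax] at hacc_g hacc_H
  have hsq : ‖s‖ ^ 2 = ‖s‖ * ‖s‖ := sq ‖s‖
  -- Taylor bound
  have htay : ‖gradient φ (x + s) - gradient φ x - Hess x s‖ ≤ L_H * ‖s‖ * ‖s‖ := by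
    have hseg : ∀ z ∈ segment ℝ x (x + s), ‖Hess z - Hess x‖ ≤ L_H * ‖s‖ := by
      intro z hz
      rw [segment_eq_image'] at hz
      obtain ⟨t, ht, rfl⟩ := hz
      have hzx : ‖x + t • (x + s - x) - x‖ = t * ‖s‖ := by
        simp [add_sub_cancel_left, norm_smul, abs_of_nonneg ht.1]
      have hts : t * ‖s‖ ≤ ‖s‖ := by nlinarith [ht.1, ht.2, norm_nonneg s]
      calc ‖Hess (x + t • (x + s - x)) - Hess x‖
          ≤ L_H * ‖x + t • (x + s - x) - x‖ := hLH _ _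
        _ ≤ L_H * ‖s‖ := by rw [hzx]; exact mul_le_mul_of_nonneg_left hts hLH0
    have hmv := (convex_segment x (x + s)).norm_image_sub_le_of_norm_hasFDerivWithin_le'
      (fun z _ => (hHess z).hasFDerivWithinAt) hseg
      (left_mem_segment ℝ x (x + s)) (right_mem_segment ℝ x (x + s))
    simpa [add_sub_cancel_left] using hmv
  -- Lipschitz gradient on the step
  have hLip : ‖gradient φ (x + s) - gradient φ x‖ ≤ L * ‖s‖ := by
    have := hL (x + s) x
    simpa [add_sub_cancel_left] using this
  -- abbreviations
  set A : EuclideanSpace ℝ (Fin n) := gradient φ (x + s) - gradient φ x - Hess x s with hA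
  set B : EuclideanSpace ℝ (Fin n) := (Hess x - H) s with hB
  set C : EuclideanSpace ℝ (Fin n) := gradient φ x - g with hC
  set D : EuclideanSpace ℝ (Fin n) := g + H s + (σ * ‖s‖) • s with hD
  set E : EuclideanSpace ℝ (Fin n) := (σ * ‖s‖) • s with hE
  -- bound on ‖g‖
  have hgbound : ‖g‖ ≤ ‖gradient φ (x + s)‖ + L * ‖s‖ + κg * (μ / σ) := by
    have hid : g = gradient φ (x + s) - (gradient φ (x + s) - gradient φ x) - C := by
      rw [hC]; abel
    calc ‖g‖
        = ‖gradient φ (x + s) - (gradient φ (x + s) - gradient φ x) - C‖ := by rw [← hid]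
      _ ≤ ‖gradient φ (x + s) - (gradient φ (x + s) - gradient φ x)‖ + ‖C‖ :=
          norm_sub_le _ _
      _ ≤ (‖gradient φ (x + s)‖ + ‖gradient φ (x + s) - gradient φ x‖) + ‖C‖ := by
          gcongr
          exact norm_sub_le _ _
      _ ≤ ‖gradient φ (x + s)‖ + L * ‖s‖ + κg * (μ / σ) := by
          linarith [hLip, hacc_g]
  have hmin1 : min 1 ‖s‖ ≤ 1 := min_le_left _ _
  have hmins : min 1 ‖s‖ ≤ ‖s‖ := min_le_right _ _
  have hmin0 : 0 ≤ min 1 ‖s‖ := le_min zero_le_one (norm_nonneg s)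
  have hG0 : 0 ≤ ‖gradient φ (x + s)‖ := norm_nonneg _
  have htermb : ‖D‖ ≤ η * ‖gradient φ (x + s)‖ + L * ‖s‖ ^ 2 + κg * (μ / σ) := by
    have h2 : η * min 1 ‖s‖ * ‖g‖
        ≤ η * min 1 ‖s‖ * (‖gradient φ (x + s)‖ + L * ‖s‖ + κg * (μ / σ)) :=
      mul_le_mul_of_nonneg_left hgbound (mul_nonneg hη.1.le hmin0)
    have h3 : η * min 1 ‖s‖ * (‖gradient φ (x + s)‖ + L * ‖s‖ + κg * (μ / σ))
        ≤ η * ‖gradient φ (x + s)‖ + L * ‖s‖ ^ 2 + κg * (μ / σ) := by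
      rw [hsq]
      have hηm1 : η * min 1 ‖s‖ ≤ η * 1 := mul_le_mul_of_nonneg_left hmin1 hη.1.le
      have hηms : η * min 1 ‖s‖ ≤ 1 * ‖s‖ := mul_le_mul hη.2.le hmins hmin0 zero_le_one
      have a1 : η * min 1 ‖s‖ * ‖gradient φ (x + s)‖ ≤ η * 1 * ‖gradient φ (x + s)‖ :=
        mul_le_mul_of_nonneg_right hηm1 hG0
      have a2 : η * min 1 ‖s‖ * (L * ‖s‖) ≤ 1 * ‖s‖ * (L * ‖s‖) :=
        mul_le_mul_of_nonneg_right hηms (mul_nonneg hL0 (norm_nonneg s))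
      have a3 : η * min 1 ‖s‖ * (κg * (μ / σ)) ≤ η * 1 * (κg * (μ / σ)) :=
        mul_le_mul_of_nonneg_right hηm1 (mul_nonneg hκg hμσ.le)
      have a4 : η * 1 * (κg * (μ / σ)) ≤ κg * (μ / σ) := by
        nlinarith [mul_nonneg hκg hμσ.le, hη.2.le, hη.1.le]
      nlinarith [a1, a2, a3, a4]
    linarith [hterm]
  -- main decomposition
  have hnormE : ‖E‖ = σ * ‖s‖ ^ 2 := by
    rw [hE, norm_smul, Real.norm_eq_abs, abs_of_nonneg (mul_nonneg hσpos.le (norm_nonneg s)),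
      hsq]
    ring
  have hid2 : gradient φ (x + s) = A + B + C + D - E := by
    rw [hA, hB, hC, hD, hE, ContinuousLinearMap.sub_apply]
    abel
  have hdecomp : ‖gradient φ (x + s)‖ ≤ ‖A‖ + ‖B‖ + ‖C‖ + ‖D‖ + σ * ‖s‖ ^ 2 := by
    rw [hid2, ← hnormE]
    calc ‖A + B + C + D - E‖ ≤ ‖A + B + C + D‖ + ‖E‖ := norm_sub_le _ _
      _ ≤ (‖A + B + C‖ + ‖D‖) + ‖E‖ := by gcongr; exact norm_add_le _ _
      _ ≤ ((‖A + B‖ + ‖C‖) + ‖D‖) + ‖E‖ := by gcongr; exact norm_add_le _ _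
      _ ≤ (((‖A‖ + ‖B‖) + ‖C‖) + ‖D‖) + ‖E‖ := by gcongr; exact norm_add_le _ _
      _ = ‖A‖ + ‖B‖ + ‖C‖ + ‖D‖ + ‖E‖ := by ring
  -- scale hcon by nonneg constants
  have e1 : L_H * ‖s‖ ^ 2 ≤ L_H * (μ / σ) := mul_le_mul_of_nonneg_left hcon.le hLH0
  have e2 : L * ‖s‖ ^ 2 ≤ L * (μ / σ) := mul_le_mul_of_nonneg_left hcon.le hL0
  have e3 : σ * ‖s‖ ^ 2 ≤ μ := by
    have := mul_le_mul_of_nonneg_left hcon.le hσpos.le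
    rwa [mul_div_cancel₀ μ hσpos.ne'] at this
  have htay' : ‖A‖ ≤ L_H * ‖s‖ ^ 2 := by rw [hsq, ← mul_assoc]; exact htay
  have key : ‖gradient φ (x + s)‖
      ≤ η * ‖gradient φ (x + s)‖ + (2 * κg + κH + L + L_H) * (μ / σ) + μ := by
    nlinarith [hdecomp, htay', hacc_g, hacc_H, htermb, e1, e2, e3]
  -- the μ condition
  have hθ3 : 0 < 1 - θ / 3 := by linarith [hθ.2]
  have hS0 : 0 ≤ 2 * κg + κH + L + L_H := by linarith
  have hσbarval : (1 - θ / 3) * σbar = 2 * κg + κH + L + L_H := by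
    rw [hσbar, mul_comm]; exact div_mul_cancel₀ _ hθ3.ne'
  have hμσmin : μ / σ ≤ μ / σmin := div_le_div_of_nonneg_left hμ.le hσmin hσ
  have hDpos : 0 < 1 + (1 - θ / 3) * σbar / σmin := by
    have h0 : 0 ≤ (1 - θ / 3) * σbar / σmin := by
      rw [hσbarval]; positivity
    linarith
  have hμD : μ * (1 + (1 - θ / 3) * σbar / σmin) ≤ (1 - η) * ε :=
    (le_div_iff₀ hDpos).mp hμle
  rw [hσbarval] at hμD
  have hexp : μ * (1 + (2 * κg + κH + L + L_H) / σmin)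
      = μ + (2 * κg + κH + L + L_H) * (μ / σmin) := by ring
  have e4 : (2 * κg + κH + L + L_H) * (μ / σ)
      ≤ (2 * κg + κH + L + L_H) * (μ / σmin) :=
    mul_le_mul_of_nonneg_left hμσmin hS0
  have hfin : (1 - η) * ‖gradient φ (x + s)‖ ≤ (1 - η) * ε := by linarith [key, e4, hμD, hexp]
  have hηpos : (0 : ℝ) < 1 - η := by linarith [hη.2]
  have hlast := mul_lt_mul_of_pos_left hgrad hηpos
  linarith
end

section
/- Let n ≥ 1, let φ : ℝⁿ → ℝ be twice continuously differentiable with L-Lipschitz gradient and L_H-Lipschitz Hessian. Let x, s ∈ ℝⁿ with x⁺ = x + s, g ∈ ℝⁿ, H : ℝⁿ → ℝⁿ symmetric linear, κ_g, κ_H ≥ 0, η ∈ (0,1), θ ∈ (0,1), ε_f' > 0, σ_min > 0, μ > 0, ε > 0, and set σ̄ = (2κ_g + κ_H + L + L_H)/(1 − θ/3). Let f(x), f(x⁺) ∈ ℝ satisfy |f(x) − φ(x)| + |f(x⁺) − φ(x⁺)| ≤ 2ε_f'. Suppose: (a) σ ≥ max{σ̄, σ_min}; (b) μ ≤ (1 −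 η)·ε / (1 + (1 − θ/3)·σ̄/σ_min); (c) the accuracy conditions ‖∇φ(x) − g‖ ≤ κ_g·max{μ/σ, ‖s‖²} and ‖(∇²φ(x) − H)s‖ ≤ κ_H·max{μ/σ, ‖s‖²} hold; (d) s satisfies the step conditions ⟨g, s⟩ + ⟨s, H s⟩ + σ‖s‖³ = 0 and ⟨s, H s⟩ + σ‖s‖³ ≥ 0, and the termination condition ‖g + H s + σ‖s‖·s‖ ≤ η·min{1, ‖s‖}·‖g‖; and (e) ‖∇φ(x+s)‖ > ε. Then the iteration is successful: f(x) − f(x⁺) + 2ε_f' ≥ θ·(m(x) − m(x+s)). -/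
/-!
Split on whether `‖s‖²` dominates `μ / σ`. If it does, both accuracy conditions are of order
`‖s‖²`, and the cubic Taylor bound for `φ` shows that the true decrease falls short of the model
decrease by at most `(κ_g + κ_H / 2 + L_H / 3)‖s‖³`; the step conditions make the model decrease
at least `σ‖s‖³ / 6`, and `σ ≥ σ̄` absorbs the shortfall. If it does not, the step is so short
that the termination test, the accuracy conditions and the Lipschitz bounds give
`(1 - η)‖∇φ(x+s)‖ ≤ (1 - θ/3) σ̄ μ / σ + μ ≤ (1 - η) ε`, contradicting `‖∇φ(x+s)‖ > ε`.
-/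

open RealInnerProductSpace

theorem nonneg_of_forall_norm_sub_le_mul {E F : Type*} [NormedAddCommGroup E] [Nontrivial E]
    [SeminormedAddCommGroup F] {f : E → F} {K : ℝ}
    (hf : ∀ y z, ‖f y - f z‖ ≤ K * ‖y - z‖) : 0 ≤ K := by
  obtain ⟨y, hy⟩ := exists_ne (0 : E)
  have h := (norm_nonneg _).trans (hf y 0)
  rw [sub_zero] at h
  exact nonneg_of_mul_nonneg_left h (norm_pos_iff.mpr hy)

theorem norm_sub_sub_fderiv_le_of_lipschitz {E F : Type*} [NormedAddCommGroup E]
    [NormedSpace ℝ E] [NormedAddCommGroup F] [NormedSpace ℝ F] {f : E → F}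
    {f' : E → E →L[ℝ] F} {K : ℝ} (hf : ∀ y, HasFDerivAt f (f' y) y) (hK0 : 0 ≤ K)
    (hK : ∀ y z, ‖f' y - f' z‖ ≤ K * ‖y - z‖) (x v : E) :
    ‖f (x + v) - f x - f' x v‖ ≤ K * ‖v‖ ^ 2 := by
  have hmem : x + v ∈ Metric.closedBall x ‖v‖ := by simp
  have h := (convex_closedBall x ‖v‖).norm_image_sub_le_of_norm_hasFDerivWithin_le'
    (fun y _ ↦ (hf y).hasFDerivWithinAt) (fun y hy ↦ (hK y x).trans
      (mul_le_mul_of_nonneg_left (mem_closedBall_iff_norm.mp hy) hK0))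
    (Metric.mem_closedBall_self (norm_nonneg v)) hmem
  rwa [add_sub_cancel_left, mul_assoc, ← sq] at h

section

variable {E : Type*} [NormedAddCommGroup E] [InnerProductSpace ℝ E]

theorem real_inner_le_inner_add_of_norm_sub_le {u w s : E} {c : ℝ} (h : ‖u - w‖ ≤ c * ‖s‖ ^ 2) :
    ⟪u, s⟫ ≤ ⟪w, s⟫ + c * ‖s‖ ^ 3 := by
  have := (real_inner_le_norm (u - w) s).trans (mul_le_mul_of_nonneg_right h (norm_nonneg s))
  rw [inner_sub_left] at this
  linarith [show c * ‖s‖ ^ 2 * ‖s‖ = c * ‖s‖ ^ 3 by ring]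

theorem le_add_inner_gradient_add_cube_of_norm_gradient_sub_le [CompleteSpace E] {φ : E → ℝ}
    {A : E →L[ℝ] E} {K : ℝ} {x : E} (hφ : Differentiable ℝ φ)
    (hgrad : ∀ v, ‖gradient φ (x + v) - gradient φ x - A v‖ ≤ K * ‖v‖ ^ 2) (v : E) :
    φ (x + v) ≤ φ x + ⟪gradient φ x, v⟫ + (1 / 2) * ⟪v, A v⟫ + (K / 3) * ‖v‖ ^ 3 := by
  set a := ⟪gradient φ x, v⟫
  set b := ⟪v, A v⟫
  set c := K * ‖v‖ ^ 3
  let ψ : ℝ → ℝ := fun t ↦ φ (x + t • v) - (a * t + b / 2 * t ^ 2 + c / 3 * t ^ 3)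
  have hψ : ∀ t, HasDerivAt ψ
      (⟪gradient φ (x + t • v), v⟫ - (a + b * t + c * t ^ 2)) t := by
    intro t
    have hline : HasDerivAt (fun t : ℝ ↦ x + t • v) v t := by
      simpa using ((hasDerivAt_id t).smul_const v).const_add x
    have hφt := (hφ (x + t • v)).hasGradientAt.hasFDerivAt.comp_hasDerivAt t hline
    have hpoly : HasDerivAt (fun t : ℝ ↦ a * t + b / 2 * t ^ 2 + c / 3 * t ^ 3)
        (a + b * t + c * t ^ 2) t :=
      ((((hasDerivAt_id t).const_mul a).add ((hasDerivAt_pow 2 t).const_mul (b / 2))).add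
        ((hasDerivAt_pow 3 t).const_mul (c / 3))).congr_deriv (by push_cast; ring)
    exact (hφt.sub hpoly).congr_deriv (by rw [InnerProductSpace.toDual_apply_apply])
  have hψ' : ∀ t, ⟪gradient φ (x + t • v), v⟫ - (a + b * t + c * t ^ 2) ≤ 0 := by
    intro t
    have hrem : ⟪gradient φ (x + t • v) - gradient φ x - A (t • v), v⟫ ≤ K * ‖t • v‖ ^ 2 * ‖v‖ :=
      (real_inner_le_norm _ _).trans (mul_le_mul_of_nonneg_right (hgrad _) (norm_nonneg v))
    rw [inner_sub_left, inner_sub_left, map_smul, real_inner_smul_left, real_inner_comm v (A v),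
      norm_smul, mul_pow, Real.norm_eq_abs, sq_abs] at hrem
    have hc : K * (t ^ 2 * ‖v‖ ^ 2) * ‖v‖ = c * t ^ 2 := by ring
    linarith
  have := antitone_of_hasDerivAt_nonpos hψ hψ' zero_le_one
  simp only [ψ, zero_smul, one_smul, add_zero] at this
  linarith

theorem theta_mul_model_decrease_le_of_large_step [CompleteSpace E] {φ : E → ℝ}
    {A H : E →L[ℝ] E} {x s g : E} {κg κH K σ θ : ℝ} (hθ : θ ≤ 1) (hK : 0 ≤ K)
    (hσ : 2 * κg + κH + K ≤ σ * (1 - θ / 3))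
    (htaylor : φ (x + s) ≤ φ x + ⟪gradient φ x, s⟫ + (1 / 2) * ⟪s, A s⟫ + (K / 3) * ‖s‖ ^ 3)
    (hg : ‖gradient φ x - g‖ ≤ κg * ‖s‖ ^ 2) (hH : ‖(A - H) s‖ ≤ κH * ‖s‖ ^ 2)
    (hstep1 : ⟪g, s⟫ + ⟪s, H s⟫ + σ * ‖s‖ ^ 3 = 0) (hstep2 : 0 ≤ ⟪s, H s⟫ + σ * ‖s‖ ^ 3) :
    θ * -(⟪g, s⟫ + (1 / 2) * ⟪s, H s⟫ + (σ / 3) * ‖s‖ ^ 3) ≤ φ x - φ (x + s) := by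
  have hmodel : σ / 6 * ‖s‖ ^ 3 ≤ -(⟪g, s⟫ + (1 / 2) * ⟪s, H s⟫ + (σ / 3) * ‖s‖ ^ 3) := by
    linarith
  rw [sub_apply] at hH
  have hgs := real_inner_le_inner_add_of_norm_sub_le hg
  have hHs := real_inner_le_inner_add_of_norm_sub_le hH
  rw [real_inner_comm s (A s), real_inner_comm s (H s)] at hHs
  have hs3 : 0 ≤ ‖s‖ ^ 3 := by positivity
  nlinarith [mul_le_mul_of_nonneg_left hmodel (sub_nonneg.mpr hθ),
    mul_le_mul_of_nonneg_right hσ hs3, mul_nonneg hK hs3]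

end

theorem one_sub_mul_norm_le_of_small_step {E : Type*} [NormedAddCommGroup E] [NormedSpace ℝ E]
    {F : E → E} {A H : E →L[ℝ] E} {x s g : E} {κg κH L K σ μ η : ℝ}
    (hη0 : 0 ≤ η) (hη1 : η ≤ 1) (hκg : 0 ≤ κg) (hL : 0 ≤ L) (hK : 0 ≤ K) (hσ : 0 < σ)
    (hs : ‖s‖ ^ 2 ≤ μ / σ) (hFL : ‖F (x + s) - F x‖ ≤ L * ‖s‖)
    (hFA : ‖F (x + s) - F x - A s‖ ≤ K * ‖s‖ ^ 2)
    (hg : ‖F x - g‖ ≤ κg * (μ / σ)) (hH : ‖(A - H) s‖ ≤ κH * (μ / σ))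
    (hterm : ‖g + H s + (σ * ‖s‖) • s‖ ≤ η * min 1 ‖s‖ * ‖g‖) :
    (1 - η) * ‖F (x + s)‖ ≤ (2 * κg + κH + L + K) * (μ / σ) + μ := by
  have hμσ : 0 ≤ μ / σ := (sq_nonneg _).trans hs
  set y := F (x + s)
  have hg_norm : ‖g‖ ≤ ‖y‖ + L * ‖s‖ + κg * (μ / σ) :=
    calc ‖g‖ ≤ ‖y‖ + (‖y - F x‖ + ‖F x - g‖) :=
          (norm_le_norm_add_norm_sub y g).trans
            (add_le_add_right (norm_sub_le_norm_sub_add_norm_sub _ _ _) _)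
      _ ≤ ‖y‖ + L * ‖s‖ + κg * (μ / σ) := by linarith
  have hmin : η * min 1 ‖s‖ * ‖g‖ ≤ η * ‖y‖ + (L + κg) * (μ / σ) := by
    have hm0 : 0 ≤ min 1 ‖s‖ := le_min zero_le_one (norm_nonneg s)
    have hm1 : η * min 1 ‖s‖ ≤ 1 := mul_le_one₀ hη1 hm0 (min_le_left _ _)
    have hms : min 1 ‖s‖ * ‖s‖ ≤ μ / σ :=
      (mul_le_mul_of_nonneg_right (min_le_right _ _) (norm_nonneg s)).trans (sq ‖s‖ ▸ hs)
    calc η * min 1 ‖s‖ * ‖g‖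
        ≤ η * min 1 ‖s‖ * (‖y‖ + L * ‖s‖ + κg * (μ / σ)) := by gcongr
      _ ≤ η * ‖y‖ + (L + κg) * (μ / σ) := by
          linarith [mul_le_mul_of_nonneg_left (min_le_left 1 ‖s‖) (mul_nonneg hη0 (norm_nonneg y)),
            mul_le_mul_of_nonneg_left hms (mul_nonneg hη0 hL),
            mul_le_mul_of_nonneg_right hη1 (mul_nonneg hL hμσ),
            mul_le_mul_of_nonneg_right hm1 (mul_nonneg hκg hμσ)]
  have hdecomp : y = (g + H s + (σ * ‖s‖) • s) + (F x - g) + (A - H) s + (y - F x - A s)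
      - (σ * ‖s‖) • s := by
    rw [sub_apply]; abel
  have hy : ‖y‖ ≤ ‖g + H s + (σ * ‖s‖) • s‖ + ‖F x - g‖ + ‖(A - H) s‖ + ‖y - F x - A s‖
      + σ * ‖s‖ ^ 2 := by
    have hσs : ‖(σ * ‖s‖) • s‖ = σ * ‖s‖ ^ 2 := by
      rw [norm_smul, Real.norm_of_nonneg (by positivity)]; ring
    calc ‖y‖ ≤ _ := hdecomp ▸ norm_sub_le _ _
      _ ≤ _ := by rw [hσs]; gcongr; exact norm_add₄_le
  have hσs : σ * ‖s‖ ^ 2 ≤ μ := by rwa [le_div_iff₀ hσ, mul_comm] at hs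
  nlinarith [mul_le_mul_of_nonneg_left hs hK]

theorem sarc_true_large_sigma_successful_general (n : ℕ) (hn : 1 ≤ n)
    (φ : EuclideanSpace ℝ (Fin n) → ℝ) (hφ : ContDiff ℝ 2 φ)
    (Hess : EuclideanSpace ℝ (Fin n) →
      EuclideanSpace ℝ (Fin n) →L[ℝ] EuclideanSpace ℝ (Fin n))
    (hHess : ∀ y, HasFDerivAt (gradient φ) (Hess y) y)
    (L L_H : ℝ)
    (hL : ∀ y z, ‖gradient φ y - gradient φ z‖ ≤ L * ‖y - z‖)
    (hLH : ∀ y z, ‖Hess y - Hess z‖ ≤ L_H * ‖y - z‖)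
    (x s g : EuclideanSpace ℝ (Fin n))
    (H : EuclideanSpace ℝ (Fin n) →L[ℝ] EuclideanSpace ℝ (Fin n))
    (κg κH η θ εf' σmin σ μ ε σbar fx fxp : ℝ)
    (hκg : 0 ≤ κg) (hκH : 0 ≤ κH)
    (hη : η ∈ Set.Ioo (0 : ℝ) 1) (hθ : θ ∈ Set.Ioo (0 : ℝ) 1)
    (hσmin : 0 < σmin) (hμ : 0 < μ)
    (hσbar : σbar = (2 * κg + κH + L + L_H) / (1 - θ / 3))
    (herr : |fx - φ x| + |fxp - φ (x + s)| ≤ 2 * εf')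
    (hσbig : σ ≥ max σbar σmin)
    (hμle : μ ≤ (1 - η) * ε / (1 + (1 - θ / 3) * σbar / σmin))
    (hacc_g : ‖gradient φ x - g‖ ≤ κg * max (μ / σ) (‖s‖ ^ 2))
    (hacc_H : ‖(Hess x - H) s‖ ≤ κH * max (μ / σ) (‖s‖ ^ 2))
    (hstep1 : ⟪g, s⟫ + ⟪s, H s⟫ + σ * ‖s‖ ^ 3 = 0)
    (hstep2 : ⟪s, H s⟫ + σ * ‖s‖ ^ 3 ≥ 0)
    (hterm : ‖g + H s + (σ * ‖s‖) • s‖ ≤ η * min 1 ‖s‖ * ‖g‖)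
    (hgrad : ‖gradient φ (x + s)‖ > ε) :
    fx - fxp + 2 * εf' ≥
      θ * (-(⟪g, s⟫ + (1 / 2) * ⟪s, H s⟫ + (σ / 3) * ‖s‖ ^ 3)) := by
  obtain ⟨hη0, hη1⟩ := hη
  have hθ3 : 0 < 1 - θ / 3 := by linarith [hθ.2]
  have : NeZero n := ⟨by omega⟩
  have hL0 : 0 ≤ L := nonneg_of_forall_norm_sub_le_mul hL
  have hLH0 : 0 ≤ L_H := nonneg_of_forall_norm_sub_le_mul hLH
  have hσbarσ : σbar ≤ σ := le_of_max_le_left hσbig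
  have hσminσ : σmin ≤ σ := le_of_max_le_right hσbig
  have hσ : 0 < σ := hσmin.trans_le hσminσ
  have hC : 2 * κg + κH + L + L_H = (1 - θ / 3) * σbar := by
    rw [hσbar, mul_div_cancel₀ _ hθ3.ne']
  have hHess_taylor := norm_sub_sub_fderiv_le_of_lipschitz hHess hLH0 hLH x
  rcases le_or_gt (μ / σ) (‖s‖ ^ 2) with hlarge | hsmall
  · rw [max_eq_right hlarge] at hacc_g hacc_H
    have hdec := theta_mul_model_decrease_le_of_large_step hθ.2.le hLH0
      (by nlinarith [mul_le_mul_of_nonneg_left hσbarσ hθ3.le])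
      (le_add_inner_gradient_add_cube_of_norm_gradient_sub_le
        (hφ.differentiable (by norm_num)) hHess_taylor s) hacc_g hacc_H hstep1 hstep2
    linarith [neg_abs_le (fx - φ x), le_abs_self (fxp - φ (x + s))]
  · rw [max_eq_left hsmall.le] at hacc_g hacc_H
    have hsmall_grad := one_sub_mul_norm_le_of_small_step hη0.le hη1.le hκg hL0 hLH0 hσ
      hsmall.le (by simpa using hL (x + s) x) (hHess_taylor s) hacc_g hacc_H hterm
    have hC0 : 0 ≤ (1 - θ / 3) * σbar := hC ▸ by positivity
    have hD : 0 < 1 + (1 - θ / 3) * σbar / σmin := by positivity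
    have : (1 - η) * ‖gradient φ (x + s)‖ ≤ (1 - η) * ε :=
      calc (1 - η) * ‖gradient φ (x + s)‖ ≤ (1 - θ / 3) * σbar * (μ / σ) + μ := hC ▸ hsmall_grad
        _ ≤ (1 - θ / 3) * σbar * (μ / σmin) + μ := by gcongr
        _ = μ * (1 + (1 - θ / 3) * σbar / σmin) := by ring
        _ ≤ (1 - η) * ε := (le_div_iff₀ hD).mp hμle
    exact absurd ((mul_le_mul_iff_right₀ (sub_pos.2 hη1)).mp this) (not_le.2 hgrad)

/-- True iteration with large `σ` must be successful (Corollary 1): under the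
accuracy conditions, the step conditions, the termination condition,
`σ ≥ max{σ̄, σ_min}`, the accuracy relation on `μ`, and `‖∇φ(x+s)‖ > ε`, the
acceptance test `f(x) − f(x⁺) + 2ε_f' ≥ θ·(m(x) − m(x+s))` holds. -/
theorem sarc_true_large_sigma_successful (n : ℕ) (hn : 1 ≤ n)
    (φ : EuclideanSpace ℝ (Fin n) → ℝ) (hφ : ContDiff ℝ 2 φ)
    (Hess : EuclideanSpace ℝ (Fin n) →
      EuclideanSpace ℝ (Fin n) →L[ℝ] EuclideanSpace ℝ (Fin n))
    (hHess : ∀ y, HasFDerivAt (gradient φ) (Hess y) y)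
    (L L_H : ℝ)
    (hL : ∀ y z, ‖gradient φ y - gradient φ z‖ ≤ L * ‖y - z‖)
    (hLH : ∀ y z, ‖Hess y - Hess z‖ ≤ L_H * ‖y - z‖)
    (x s g : EuclideanSpace ℝ (Fin n))
    (H : EuclideanSpace ℝ (Fin n) →L[ℝ] EuclideanSpace ℝ (Fin n))
    (hHsym : ∀ u v : EuclideanSpace ℝ (Fin n), ⟪H u, v⟫ = ⟪u, H v⟫)
    (κg κH η θ εf' σmin σ μ ε σbar fx fxp : ℝ)
    (hκg : 0 ≤ κg) (hκH : 0 ≤ κH)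
    (hη : η ∈ Set.Ioo (0 : ℝ) 1) (hθ : θ ∈ Set.Ioo (0 : ℝ) 1)
    (hεf' : 0 < εf') (hσmin : 0 < σmin) (hμ : 0 < μ) (hε : 0 < ε)
    (hσbar : σbar = (2 * κg + κH + L + L_H) / (1 - θ / 3))
    (herr : |fx - φ x| + |fxp - φ (x + s)| ≤ 2 * εf')
    (hσbig : σ ≥ max σbar σmin)
    (hμle : μ ≤ (1 - η) * ε / (1 + (1 - θ / 3) * σbar / σmin))
    (hacc_g : ‖gradient φ x - g‖ ≤ κg * max (μ / σ) (‖s‖ ^ 2))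
    (hacc_H : ‖(Hess x - H) s‖ ≤ κH * max (μ / σ) (‖s‖ ^ 2))
    (hstep1 : ⟪g, s⟫ + ⟪s, H s⟫ + σ * ‖s‖ ^ 3 = 0)
    (hstep2 : ⟪s, H s⟫ + σ * ‖s‖ ^ 3 ≥ 0)
    (hterm : ‖g + H s + (σ * ‖s‖) • s‖ ≤ η * min 1 ‖s‖ * ‖g‖)
    (hgrad : ‖gradient φ (x + s)‖ > ε) :
    fx - fxp + 2 * εf' ≥
      θ * (-(⟪g, s⟫ + (1 / 2) * ⟪s, H s⟫ + (σ / 3) * ‖s‖ ^ 3)) :=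
  sarc_true_large_sigma_successful_general n hn φ hφ Hess hHess L L_H hL hLH x s g H κg κH η θ εf'
    σmin σ μ ε σbar fx fxp hκg hκH hη hθ hσmin hμ hσbar herr hσbig hμle hacc_g hacc_H hstep1 hstep2
    hterm hgrad
end

section
/- Let n ≥ 1, let φ : ℝⁿ → ℝ be twice continuously differentiable with L-Lipschitz gradient and L_H-Lipschitz Hessian. Let x, s ∈ ℝⁿ with x⁺ = x + s, g ∈ ℝⁿ, H : ℝⁿ → ℝⁿ symmetric linear, κ_g, κ_H ≥ 0, η ∈ (0,1), θ ∈ (0,1), ε_f' > 0, σ_min > 0, σ ≥ σ_min, μ > 0, ε > 0, and set σ̄ = (2κ_g + κ_H + L + L_H)/(1 − θ/3). Let f(x), f(x⁺) ∈ ℝ with errors e = |f(x) − φ(x)| and e⁺ = |f(x⁺) − φ(x⁺)|. Suppose: (a) μ ≤ (1 − η)·ε / (1 + (1 − θ/3)·σ̄/σ_min); (b) the accuracy conditions ‖∇φ(x) − g‖ ≤ κ_g·max{μ/σ, ‖s‖²} and ‖(∇²φ(x) − H)s‖ ≤ κ_H·max{μ/σ, ‖s‖²} hold; (c) s satisfies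 the step conditions ⟨g, s⟩ + ⟨s, H s⟩ + σ‖s‖³ = 0 and ⟨s, H s⟩ + σ‖s‖³ ≥ 0, and the termination condition ‖g + H s + σ‖s‖·s‖ ≤ η·min{1, ‖s‖}·‖g‖; (d) the acceptance condition f(x) − f(x⁺) + 2ε_f' ≥ θ·(m(x) − m(x+s)) holds; and (e) ‖∇φ(x+s)‖ > ε. Then φ(x) − φ(x⁺) ≥ (θ/6)·(1 − η)^{3/2}·σ/(σ + (1 − θ/3)·σ̄)^{3/2}·‖∇φ(x+s)‖^{3/2} − e − e⁺ − 2ε_f', and in particular φ(x) − φ(x⁺) ≥ (θ/6)·(1 − η)^{3/2}·σ_min/(σ + (1 − θ/3)·σ̄)^{3/2}·‖∇φ(x+s)‖^{3/2} − e − e⁺ − 2ε_f'. -/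
open RealInnerProductSpace

/-!
Write `∇φ(x+s)` as the sum of the Taylor remainder `∇φ(x+s) − ∇φ(x) − ∇²φ(x)s`, the Hessian
error `(∇²φ(x) − H)s`, the gradient error `∇φ(x) − g`, the model gradient `∇m(x+s)` and
`−σ‖s‖s`. The Lipschitz Hessian, the accuracy conditions and the termination test (together with
`‖g‖ ≤ ‖∇φ(x+s)‖ + κ_g max{μ/σ, ‖s‖²} + L‖s‖`) bound these pieces, which gives
`(1 − η)‖∇φ(x+s)‖ ≤ (σ + (1 − θ/3)σ̄)‖s‖²` whenever `‖s‖² ≥ μ/σ`; the opposite case would force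
`(1 − η)‖∇φ(x+s)‖ < μ(1 + (1 − θ/3)σ̄/σ_min) ≤ (1 − η)ε`, which the choice of `μ` rules out.
By the step conditions the model decrease is `(⟪s, Hs⟫ + σ‖s‖³)/2 + σ‖s‖³/6 ≥ σ‖s‖³/6`, and
the acceptance test passes `θ` times this decrease on to `φ`, up to the errors `e`, `e⁺` and
`2ε_f'`.
-/

section Lipschitz

variable {E F : Type*} [NormedAddCommGroup E] [NormedAddCommGroup F]

theorem nonneg_of_norm_sub_le_mul_norm_sub [Nontrivial E] {f : E → F} {K : ℝ}
    (hf : ∀ y z, ‖f y - f z‖ ≤ K * ‖y - z‖) : 0 ≤ K := by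
  obtain ⟨y, hy⟩ := exists_ne (0 : E)
  have hK : 0 ≤ K * ‖y‖ := by simpa using (norm_nonneg _).trans (hf y 0)
  exact nonneg_of_mul_nonneg_left hK (norm_pos_iff.2 hy)

variable [NormedSpace ℝ E] [NormedSpace ℝ F]

theorem norm_sub_sub_fderiv_apply_le_of_lipschitz {f : E → F} {f' : E → E →L[ℝ] F} {K : ℝ}
    (hf : ∀ y, HasFDerivAt f (f' y) y) (hK : 0 ≤ K)
    (hf' : ∀ y z, ‖f' y - f' z‖ ≤ K * ‖y - z‖) (x s : E) :
    ‖f (x + s) - f x - f' x s‖ ≤ K * ‖s‖ ^ 2 := by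
  have hseg : ∀ y ∈ segment ℝ x (x + s), ‖f' y - f' x‖ ≤ K * ‖s‖ := by
    rintro _ ⟨a, b, ha, hb, hab, rfl⟩
    have hyx : a • x + b • (x + s) - x = b • s := by
      rw [← sub_eq_of_eq_add hab.symm]; module
    calc ‖f' (a • x + b • (x + s)) - f' x‖ ≤ K * ‖a • x + b • (x + s) - x‖ := hf' _ x
      _ = K * (b * ‖s‖) := by rw [hyx, norm_smul, Real.norm_of_nonneg hb]
      _ ≤ K * ‖s‖ := by
          gcongr; exact mul_le_of_le_one_left (norm_nonneg s) (by linarith)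
  have h := (convex_segment x (x + s)).norm_image_sub_le_of_norm_hasFDerivWithin_le'
    (fun y _ => (hf y).hasFDerivWithinAt) hseg
    (left_mem_segment ℝ x (x + s)) (right_mem_segment ℝ x (x + s))
  rw [add_sub_cancel_left] at h
  linarith

end Lipschitz

section CubicStep

variable {E : Type*} [NormedAddCommGroup E] [NormedSpace ℝ E]

theorem one_sub_mul_norm_le_of_cubic_step {f : E → E} {D : E → E →L[ℝ] E}
    {L L_H κg κH η σ M : ℝ} {x s g : E} {H : E →L[ℝ] E}
    (hfD : ∀ y, HasFDerivAt f (D y) y) (hLH0 : 0 ≤ L_H)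
    (hLH : ∀ y z, ‖D y - D z‖ ≤ L_H * ‖y - z‖) (hL : ‖f x - f (x + s)‖ ≤ L * ‖s‖)
    (hη0 : 0 ≤ η) (hη1 : η ≤ 1) (hσ : 0 ≤ σ)
    (hg : ‖f x - g‖ ≤ κg * M) (hH : ‖(D x - H) s‖ ≤ κH * M)
    (hterm : ‖g + H s + (σ * ‖s‖) • s‖ ≤ η * min 1 ‖s‖ * ‖g‖) :
    (1 - η) * ‖f (x + s)‖ ≤ (L_H + L + σ) * ‖s‖ ^ 2 + (κH + 2 * κg) * M := by
  have htaylor := norm_sub_sub_fderiv_apply_le_of_lipschitz hfD hLH0 hLH x s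
  have hshift : ‖(σ * ‖s‖) • s‖ = σ * ‖s‖ ^ 2 := by
    rw [norm_smul, Real.norm_of_nonneg (by positivity)]; ring
  have hsplit : ‖f (x + s)‖ ≤ ‖f (x + s) - f x - D x s‖ + ‖(D x - H) s‖ + ‖f x - g‖
      + ‖g + H s + (σ * ‖s‖) • s‖ + σ * ‖s‖ ^ 2 := by
    calc ‖f (x + s)‖ = ‖(f (x + s) - f x - D x s) + (D x - H) s + (f x - g)
          + (g + H s + (σ * ‖s‖) • s) - (σ * ‖s‖) • s‖ := by
          congr 1; simp only [sub_apply]; abel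
      _ ≤ _ := by grw [norm_sub_le, norm_add_le, norm_add₃_le, hshift]
  have hgnorm : ‖g‖ ≤ κg * M + L * ‖s‖ + ‖f (x + s)‖ := by
    calc ‖g‖ = ‖(g - f x) + (f x - f (x + s)) + f (x + s)‖ := by congr 1; abel
      _ ≤ ‖g - f x‖ + ‖f x - f (x + s)‖ + ‖f (x + s)‖ := norm_add₃_le
      _ ≤ _ := by rw [norm_sub_rev]; gcongr
  have hmin0 : 0 ≤ min 1 ‖s‖ := le_min zero_le_one (norm_nonneg s)
  have ht1 : η * min 1 ‖s‖ ≤ η := mul_le_of_le_one_right hη0 (min_le_left _ _)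
  have hts : η * min 1 ‖s‖ ≤ ‖s‖ :=
    (mul_le_of_le_one_left hmin0 hη1).trans (min_le_right _ _)
  have hmodel : ‖g + H s + (σ * ‖s‖) • s‖ ≤ κg * M + L * ‖s‖ ^ 2 + η * ‖f (x + s)‖ := by
    have hgM : 0 ≤ κg * M := (norm_nonneg _).trans hg
    have hLs : 0 ≤ L * ‖s‖ := (norm_nonneg _).trans hL
    calc _ ≤ η * min 1 ‖s‖ * (κg * M + L * ‖s‖ + ‖f (x + s)‖) := by
          grw [hterm, hgnorm]
      _ ≤ 1 * (κg * M) + ‖s‖ * (L * ‖s‖) + η * ‖f (x + s)‖ := by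
          rw [mul_add, mul_add]; gcongr; linarith
      _ = _ := by ring
  linarith

end CubicStep

theorem one_sub_mul_le_add_mul_sq_of_le_max {η σ σmin μ ε p b G r : ℝ}
    (hp : 0 ≤ p) (hb : 0 ≤ b) (hσmin : 0 < σmin) (hσ : σmin ≤ σ) (hμ : 0 ≤ μ) (hη : η < 1)
    (hμle : μ ≤ (1 - η) * ε / (1 + (p + b) / σmin)) (hG : ε < G)
    (h : (1 - η) * G ≤ (p + σ) * r ^ 2 + b * max (μ / σ) (r ^ 2)) :
    (1 - η) * G ≤ (σ + (p + b)) * r ^ 2 := by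
  have hσ0 : 0 < σ := hσmin.trans_le hσ
  rcases le_or_gt (μ / σ) (r ^ 2) with hM | hM
  · rw [max_eq_right hM] at h
    linarith
  · rw [max_eq_left hM.le] at h
    have hσr : σ * r ^ 2 < μ := by rwa [lt_div_iff₀ hσ0, mul_comm] at hM
    have hμ' : μ * (1 + (p + b) / σmin) ≤ (1 - η) * ε := by
      rwa [le_div_iff₀ (by positivity)] at hμle
    have hpM : p * r ^ 2 ≤ p * (μ / σ) := by gcongr
    have hcontra : (1 - η) * G < (1 - η) * G := calc
      (1 - η) * G ≤ σ * r ^ 2 + (p + b) * (μ / σ) := by linarith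
      _ < μ + (p + b) * (μ / σmin) := add_lt_add_of_lt_of_le hσr (by gcongr)
      _ = μ * (1 + (p + b) / σmin) := by ring
      _ ≤ (1 - η) * ε := hμ'
      _ < (1 - η) * G := by gcongr
    exact absurd hcontra (lt_irrefl _)

theorem rpow_three_halves_le_pow_three {a r : ℝ} (ha : 0 ≤ a) (hr : 0 ≤ r) (h : a ≤ r ^ 2) :
    a ^ ((3 : ℝ) / 2) ≤ r ^ 3 := by
  calc a ^ ((3 : ℝ) / 2) ≤ (r ^ 2) ^ ((3 : ℝ) / 2) := by gcongr
    _ = r ^ 3 := by rw [← Real.rpow_natCast_mul hr]; norm_num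

theorem mul_rpow_three_halves_le_of_le_mul_sq {θ η σ k G r : ℝ} (hθ : 0 ≤ θ) (hσ : 0 ≤ σ)
    (hη : η ≤ 1) (hk : 0 < k) (hG : 0 ≤ G) (hr : 0 ≤ r) (h : (1 - η) * G ≤ k * r ^ 2) :
    θ / 6 * (1 - η) ^ ((3 : ℝ) / 2) * (σ / k ^ ((3 : ℝ) / 2)) * G ^ ((3 : ℝ) / 2)
      ≤ θ * (σ / 6 * r ^ 3) := by
  have hη' : 0 ≤ 1 - η := by linarith
  have hr3 := rpow_three_halves_le_pow_three (by positivity) hr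
    ((div_le_iff₀' hk).2 h : (1 - η) * G / k ≤ r ^ 2)
  rw [Real.div_rpow (by positivity) hk.le, Real.mul_rpow hη' hG] at hr3
  calc _ = θ * σ / 6 * ((1 - η) ^ ((3 : ℝ) / 2) * G ^ ((3 : ℝ) / 2) / k ^ ((3 : ℝ) / 2)) := by
        ring
    _ ≤ θ * σ / 6 * r ^ 3 := by gcongr
    _ = _ := by ring

theorem sarc_min_improvement_general (n : ℕ)
    (φ : EuclideanSpace ℝ (Fin n) → ℝ)
    (Hess : EuclideanSpace ℝ (Fin n) →
      EuclideanSpace ℝ (Fin n) →L[ℝ] EuclideanSpace ℝ (Fin n))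
    (hHess : ∀ y, HasFDerivAt (gradient φ) (Hess y) y)
    (L L_H : ℝ)
    (hL : ∀ y z, ‖gradient φ y - gradient φ z‖ ≤ L * ‖y - z‖)
    (hLH : ∀ y z, ‖Hess y - Hess z‖ ≤ L_H * ‖y - z‖)
    (x s g : EuclideanSpace ℝ (Fin n))
    (H : EuclideanSpace ℝ (Fin n) →L[ℝ] EuclideanSpace ℝ (Fin n))
    (κg κH η θ εf' σmin σ μ ε σbar fx fxp : ℝ)
    (hκg : 0 ≤ κg) (hκH : 0 ≤ κH)
    (hη : η ∈ Set.Ioo (0 : ℝ) 1) (hθ : θ ∈ Set.Ioo (0 : ℝ) 1)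
    (hσmin : 0 < σmin) (hσ : σ ≥ σmin) (hμ : 0 < μ) (hε : 0 < ε)
    (hσbar : σbar = (2 * κg + κH + L + L_H) / (1 - θ / 3))
    (hμle : μ ≤ (1 - η) * ε / (1 + (1 - θ / 3) * σbar / σmin))
    (hacc_g : ‖gradient φ x - g‖ ≤ κg * max (μ / σ) (‖s‖ ^ 2))
    (hacc_H : ‖(Hess x - H) s‖ ≤ κH * max (μ / σ) (‖s‖ ^ 2))
    (hstep1 : ⟪g, s⟫ + ⟪s, H s⟫ + σ * ‖s‖ ^ 3 = 0)
    (hstep2 : ⟪s, H s⟫ + σ * ‖s‖ ^ 3 ≥ 0)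
    (hterm : ‖g + H s + (σ * ‖s‖) • s‖ ≤ η * min 1 ‖s‖ * ‖g‖)
    (haccept : fx - fxp + 2 * εf' ≥
      θ * (-(⟪g, s⟫ + (1 / 2) * ⟪s, H s⟫ + (σ / 3) * ‖s‖ ^ 3)))
    (hgrad : ‖gradient φ (x + s)‖ > ε) :
    φ x - φ (x + s) ≥
        (θ / 6) * (1 - η) ^ ((3 : ℝ) / 2) *
          (σ / (σ + (1 - θ / 3) * σbar) ^ ((3 : ℝ) / 2)) *
          ‖gradient φ (x + s)‖ ^ ((3 : ℝ) / 2)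
        - |fx - φ x| - |fxp - φ (x + s)| - 2 * εf' ∧
      φ x - φ (x + s) ≥
        (θ / 6) * (1 - η) ^ ((3 : ℝ) / 2) *
          (σmin / (σ + (1 - θ / 3) * σbar) ^ ((3 : ℝ) / 2)) *
          ‖gradient φ (x + s)‖ ^ ((3 : ℝ) / 2)
        - |fx - φ x| - |fxp - φ (x + s)| - 2 * εf' := by
  obtain ⟨hη0, hη1⟩ := hη
  obtain ⟨hθ0, hθ1⟩ := hθ
  have hσ0 : 0 < σ := hσmin.trans_le hσ
  have : Nontrivial (EuclideanSpace ℝ (Fin n)) :=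
    nontrivial_of_ne _ 0 (norm_pos_iff.1 (hε.trans hgrad))
  have hL0 := nonneg_of_norm_sub_le_mul_norm_sub hL
  have hLH0 := nonneg_of_norm_sub_le_mul_norm_sub hLH
  have hc : (1 - θ / 3) * σbar = L_H + L + (κH + 2 * κg) := by
    rw [hσbar, mul_div_cancel₀ _ (by linarith)]; ring
  rw [hc] at hμle ⊢
  have hLs : ‖gradient φ x - gradient φ (x + s)‖ ≤ L * ‖s‖ := by simpa using hL x (x + s)
  have hstep := one_sub_mul_le_add_mul_sq_of_le_max (by linarith) (by linarith) hσmin hσ hμ.le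
    hη1 hμle hgrad (one_sub_mul_norm_le_of_cubic_step hHess hLH0 hLH hLs hη0.le hη1.le
      hσ0.le hacc_g hacc_H hterm)
  have hgain := mul_rpow_three_halves_le_of_le_mul_sq hθ0.le hσ0.le hη1.le (by linarith)
    (norm_nonneg _) (norm_nonneg s) hstep
  have hmodel : σ / 6 * ‖s‖ ^ 3 ≤ -(⟪g, s⟫ + (1 / 2) * ⟪s, H s⟫ + (σ / 3) * ‖s‖ ^ 3) := by
    linarith
  have hdecrease := mul_le_mul_of_nonneg_left hmodel hθ0.le
  refine (fun h => ⟨h, le_trans ?_ h⟩) ?_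
  · linarith [le_abs_self (fx - φ x), neg_abs_le (fxp - φ (x + s))]
  · have : 0 ≤ 1 - η := by linarith
    gcongr

/-- Minimum improvement achieved by true and successful iterations (Lemma 7):
on a true, accepted iteration with `‖∇φ(x+s)‖ > ε`,
`φ(x) − φ(x⁺) ≥ (θ/6)(1 − η)^{3/2} σ/(σ + (1 − θ/3)σ̄)^{3/2} ‖∇φ(x+s)‖^{3/2}
 − e − e⁺ − 2ε_f'`, and the same bound with `σ` replaced by `σ_min` in the
numerator. -/
theorem sarc_min_improvement (n : ℕ) (hn : 1 ≤ n)
    (φ : EuclideanSpace ℝ (Fin n) → ℝ) (hφ : ContDiff ℝ 2 φ)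
    (Hess : EuclideanSpace ℝ (Fin n) →
      EuclideanSpace ℝ (Fin n) →L[ℝ] EuclideanSpace ℝ (Fin n))
    (hHess : ∀ y, HasFDerivAt (gradient φ) (Hess y) y)
    (L L_H : ℝ)
    (hL : ∀ y z, ‖gradient φ y - gradient φ z‖ ≤ L * ‖y - z‖)
    (hLH : ∀ y z, ‖Hess y - Hess z‖ ≤ L_H * ‖y - z‖)
    (x s g : EuclideanSpace ℝ (Fin n))
    (H : EuclideanSpace ℝ (Fin n) →L[ℝ] EuclideanSpace ℝ (Fin n))
    (hHsym : ∀ u v : EuclideanSpace ℝ (Fin n), ⟪H u, v⟫ = ⟪u, H v⟫)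
    (κg κH η θ εf' σmin σ μ ε σbar fx fxp : ℝ)
    (hκg : 0 ≤ κg) (hκH : 0 ≤ κH)
    (hη : η ∈ Set.Ioo (0 : ℝ) 1) (hθ : θ ∈ Set.Ioo (0 : ℝ) 1)
    (hεf' : 0 < εf') (hσmin : 0 < σmin) (hσ : σ ≥ σmin) (hμ : 0 < μ) (hε : 0 < ε)
    (hσbar : σbar = (2 * κg + κH + L + L_H) / (1 - θ / 3))
    (hμle : μ ≤ (1 - η) * ε / (1 + (1 - θ / 3) * σbar / σmin))
    (hacc_g : ‖gradient φ x - g‖ ≤ κg * max (μ / σ) (‖s‖ ^ 2))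
    (hacc_H : ‖(Hess x - H) s‖ ≤ κH * max (μ / σ) (‖s‖ ^ 2))
    (hstep1 : ⟪g, s⟫ + ⟪s, H s⟫ + σ * ‖s‖ ^ 3 = 0)
    (hstep2 : ⟪s, H s⟫ + σ * ‖s‖ ^ 3 ≥ 0)
    (hterm : ‖g + H s + (σ * ‖s‖) • s‖ ≤ η * min 1 ‖s‖ * ‖g‖)
    (haccept : fx - fxp + 2 * εf' ≥
      θ * (-(⟪g, s⟫ + (1 / 2) * ⟪s, H s⟫ + (σ / 3) * ‖s‖ ^ 3)))
    (hgrad : ‖gradient φ (x + s)‖ > ε) :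
    φ x - φ (x + s) ≥
        (θ / 6) * (1 - η) ^ ((3 : ℝ) / 2) *
          (σ / (σ + (1 - θ / 3) * σbar) ^ ((3 : ℝ) / 2)) *
          ‖gradient φ (x + s)‖ ^ ((3 : ℝ) / 2)
        - |fx - φ x| - |fxp - φ (x + s)| - 2 * εf' ∧
      φ x - φ (x + s) ≥
        (θ / 6) * (1 - η) ^ ((3 : ℝ) / 2) *
          (σmin / (σ + (1 - θ / 3) * σbar) ^ ((3 : ℝ) / 2)) *
          ‖gradient φ (x + s)‖ ^ ((3 : ℝ) / 2)
        - |fx - φ x| - |fxp - φ (x + s)| - 2 * εf' :=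
  sarc_min_improvement_general n φ Hess hHess L L_H hL hLH x s g H κg κH η θ εf' σmin σ μ ε σbar fx
    fxp hκg hκH hη hθ hσmin hσ hμ hε hσbar hμle hacc_g hacc_H hstep1 hstep2 hterm haccept hgrad
end
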